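/- arXiv:2311.05474 — 9 statements merged into one kernel-verified Lean document; each statement's English description precedes it below -/
import Mathlib

section
/- Let a_1,…,a_m, B, K be positive integers with ∑ a_i ≤ B·K, and set N = B·K and p_i = a_1 + … + a_i (p_0 = 0). Define a virtual line on vertices 1,…,N where the edge {j, j+1} has demand w_j = 1 if there exists i with p_{i−1} + 1 ≤ j and j + 1 ≤ p_{i−1} + a_i (i.e., j and j+1 lie in the same element section), and w_j = 0 otherwise; define a physical line on vertices 1,…,N where the edge {k, k+1} has cost t_k = 1 if B divides k and t_k = 0 otherwise. Then the indices {1,…,m} can be partitioned into K subsets each with ∑ a_i at most B if and only if there exists a bijection f : {1,…,N} → {1,…,N} with embedding cost ∑_{j=1}^{N−1} w_j · (∑_{k = min(f(j), f(j+1))}^{max(f(j), f(j+1)) − 1} t_k) = 0, equivalently such that ⌈f(j)/B⌉ = ⌈f(j+1)/B⌉ whenever w_j = 1. (This is the correctness of the reduction of bin packing to wVNE of a linear virtual network on a linear physical network.) -/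
open Classical Finset

/-!
Split the physical line into the blocks `((k - 1) B, k B]`. A physical edge `{x, x + 1}` costs `1`
exactly when it leaves a block, so the cost between `x` and `y` is the difference of their block
indices `(x - 1) / B` and `(y - 1) / B`. An embedding has cost `0` iff it sends each element
section (the `a i` consecutive virtual vertices of item `i`) into a single block. A packing gives
such an embedding by filling block `k` with the vertices of bin `k` in increasing order and
extending to a bijection; conversely, reading off the block of each section is a packing, since an
injective map sends at most `B` vertices into a block.
-/

theorem exists_bijOn_eqOn_of_injOn {α : Type*} {s t : Finset α} {f : α → α}
    (hst : s ⊆ t) (hf : Set.MapsTo f s t) (hinj : Set.InjOn f s) :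
    ∃ g : α → α, Set.BijOn g t t ∧ Set.EqOn g f s := by
  obtain ⟨e, he⟩ := Set.MapsTo.exists_equiv_extend_of_card_eq (α := t) (t := t)
    (s := {x | (x : α) ∈ s}) (f := fun x => f x) (by simp) (fun x hx => hf hx)
    (fun x hx y hy hxy => Subtype.ext (hinj hx hy hxy))
  refine ⟨fun x => if hx : x ∈ t then e ⟨x, hx⟩ else x, ⟨?_, ?_, ?_⟩, ?_⟩
  · intro x hx
    simp only [mem_coe] at hx
    simp [hx]
  · intro x hx y hy hxy
    simp only [mem_coe] at hx hy
    simpa [hx, hy, Subtype.ext_iff] using hxy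
  · intro y hy
    refine ⟨e.symm ⟨y, hy⟩, (e.symm ⟨y, hy⟩).2, ?_⟩
    simp
  · intro x hx
    simpa [hst hx] using he ⟨x, hst hx⟩ hx

section Packing

variable (B : ℕ) (s : Finset ℕ) (β : ℕ → ℕ)

def classRank (x : ℕ) : ℕ := #{y ∈ s | β y = β x ∧ y < x}

def packSlot (x : ℕ) : ℕ := β x * B + classRank s β x + 1

variable {B s β}

theorem classRank_lt {x : ℕ} (hx : x ∈ s) (hcap : #{y ∈ s | β y = β x} ≤ B) :
    classRank s β x < B := by
  refine lt_of_lt_of_le (card_lt_card ?_) hcap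
  refine (ssubset_iff_of_subset fun y hy => ?_).2 ⟨x, by simp [hx], by simp⟩
  simp only [mem_filter] at hy ⊢
  exact ⟨hy.1, hy.2.1⟩

theorem classRank_lt_classRank {x y : ℕ} (hx : x ∈ s) (hβ : β x = β y) (hxy : x < y) :
    classRank s β x < classRank s β y := by
  refine card_lt_card ((ssubset_iff_of_subset fun z hz => ?_).2 ⟨x, ?_, by simp⟩)
  · simp only [mem_filter] at hz ⊢
    exact ⟨hz.1, hz.2.1.trans hβ, hz.2.2.trans hxy⟩
  · simp [hx, hβ, hxy]

theorem packSlot_sub_one_div {x : ℕ} (hx : x ∈ s) (hcap : #{y ∈ s | β y = β x} ≤ B) :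
    (packSlot B s β x - 1) / B = β x := by
  have hrank := classRank_lt hx hcap
  rw [packSlot, Nat.add_sub_cancel, Nat.add_comm, Nat.add_mul_div_right _ _ (by omega),
    Nat.div_eq_of_lt hrank, zero_add]

theorem injOn_packSlot (hcap : ∀ x ∈ s, #{y ∈ s | β y = β x} ≤ B) :
    Set.InjOn (packSlot B s β) s := by
  intro x hx y hy hxy
  have hβ : β x = β y := by
    rw [← packSlot_sub_one_div hx (hcap x hx), ← packSlot_sub_one_div hy (hcap y hy), hxy]
  have hrank : classRank s β x = classRank s β y := by
    simp only [packSlot, hβ] at hxy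
    omega
  rcases lt_trichotomy x y with h | h | h
  · exact absurd hrank (classRank_lt_classRank hx hβ h).ne
  · exact h
  · exact absurd hrank (classRank_lt_classRank hy hβ.symm h).ne'

theorem mapsTo_packSlot {K : ℕ} (hcap : ∀ x ∈ s, #{y ∈ s | β y = β x} ≤ B)
    (hK : ∀ x ∈ s, β x < K) : Set.MapsTo (packSlot B s β) s (Icc 1 (B * K)) := by
  intro x hx
  have hrank := classRank_lt hx (hcap x hx)
  have hslot : (β x + 1) * B ≤ B * K := by
    rw [mul_comm B]; exact Nat.mul_le_mul_right B (hK x hx)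
  simp only [coe_Icc, Set.mem_Icc, packSlot]
  constructor
  · omega
  · nlinarith

end Packing

theorem card_le_of_forall_sub_one_div_eq {B c : ℕ} (hB : 0 < B) {t : Finset ℕ}
    (ht : ∀ y ∈ t, 1 ≤ y ∧ (y - 1) / B = c) : #t ≤ B := by
  calc #t ≤ #(range B) := card_le_card_of_injOn (fun y => (y - 1) % B)
        (fun y _ => by simpa using Nat.mod_lt _ hB) (fun y hy z hz hyz => by
          obtain ⟨hy1, hyc⟩ := ht y hy
          obtain ⟨hz1, hzc⟩ := ht z hz
          have hy' := Nat.div_add_mod (y - 1) B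
          have hz' := Nat.div_add_mod (z - 1) B
          rw [hyc] at hy'
          rw [hzc] at hz'
          simp only at hyz
          omega)
    _ = B := card_range B

theorem forall_mem_Ioc_eq_of_succ {α : Type*} {φ : ℕ → α} {u v : ℕ}
    (h : ∀ j, j ∈ Ioc u v → j + 1 ∈ Ioc u v → φ j = φ (j + 1)) :
    ∀ j ∈ Ioc u v, φ j = φ (u + 1) := by
  intro j hj
  obtain ⟨huj, hjv⟩ := mem_Ioc.1 hj
  induction j, (show u + 1 ≤ j by omega) using Nat.le_induction with
  | base => rfl
  | succ n hn ih =>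
    rw [← h n (mem_Ioc.2 ⟨by omega, by omega⟩) hj,
      ih (mem_Ioc.2 ⟨by omega, by omega⟩) (by omega) (by omega)]

section Sections

variable (a : ℕ → ℕ)

def prefixSum (i : ℕ) : ℕ := ∑ l ∈ Icc 1 i, a l

def itemSection (i : ℕ) : Finset ℕ := Ioc (prefixSum a (i - 1)) (prefixSum a i)

noncomputable def itemOf (j : ℕ) : ℕ := sInf {i | j ≤ prefixSum a i}

variable {a}

theorem prefixSum_mono : Monotone (prefixSum a) :=
  fun _ _ h => sum_le_sum_of_subset (Icc_subset_Icc_right h)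

theorem prefixSum_sub_one_add {i : ℕ} (hi : 1 ≤ i) :
    prefixSum a (i - 1) + a i = prefixSum a i := by
  obtain ⟨i, rfl⟩ := Nat.exists_eq_add_of_le' hi
  simp [prefixSum, sum_Icc_succ_top]

theorem card_itemSection {i : ℕ} (hi : 1 ≤ i) : #(itemSection a i) = a i := by
  rw [itemSection, Nat.card_Ioc, ← prefixSum_sub_one_add hi, Nat.add_sub_cancel_left]

theorem itemSection_subset {i m : ℕ} (him : i ≤ m) :
    itemSection a i ⊆ Icc 1 (prefixSum a m) := by
  intro j hj
  have := prefixSum_mono (a := a) him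
  simp only [itemSection, mem_Ioc, mem_Icc] at hj ⊢
  omega

theorem itemOf_eq {i j : ℕ} (hi : 1 ≤ i) (hj : j ∈ itemSection a i) : itemOf a j = i := by
  rw [itemSection, mem_Ioc] at hj
  refine le_antisymm (Nat.sInf_le hj.2) (le_csInf ⟨i, hj.2⟩ fun i' hi' => ?_)
  by_contra! hlt
  have := prefixSum_mono (a := a) (show i' ≤ i - 1 by omega)
  exact absurd (hi'.trans this) (by omega)

theorem card_biUnion_itemSection {S : Finset ℕ} (hS : ∀ i ∈ S, 1 ≤ i) :
    #(S.biUnion (itemSection a)) = ∑ i ∈ S, a i := by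
  rw [card_biUnion fun i hi i' hi' hii' => disjoint_left.2 fun j hj hj' =>
    hii' ((itemOf_eq (hS i hi) hj).symm.trans (itemOf_eq (hS i' hi') hj'))]
  exact sum_congr rfl fun i hi => card_itemSection (hS i hi)

end Sections

-- `demand` and `edgeCost` are the two factors of the cost in `binPacking_iff_line_on_line_wVNE`,
-- so that its sum is `embeddingCost a m B (B * K) f` by unfolding.
def edgeCost (B x y : ℕ) : ℕ := ∑ k ∈ Ico (min x y) (max x y), if B ∣ k then 1 else 0

noncomputable def demand (a : ℕ → ℕ) (m j : ℕ) : ℕ :=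
  if ∃ i ∈ Icc 1 m, prefixSum a (i - 1) + 1 ≤ j ∧ j + 1 ≤ prefixSum a (i - 1) + a i
  then 1 else 0

noncomputable def embeddingCost (a : ℕ → ℕ) (m B N : ℕ) (f : ℕ → ℕ) : ℕ :=
  ∑ j ∈ Icc 1 (N - 1), demand a m j * edgeCost B (f j) (f (j + 1))

theorem edgeCost_comm (B x y : ℕ) : edgeCost B x y = edgeCost B y x := by
  rw [edgeCost, edgeCost, min_comm, max_comm]

theorem edgeCost_eq_zero_iff_of_le {B x y : ℕ} (hx : 1 ≤ x) (hxy : x ≤ y) :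
    edgeCost B x y = 0 ↔ (x - 1) / B = (y - 1) / B := by
  have hIco : Ico x y = Ioc (x - 1) (y - 1) := by
    ext k; simp only [mem_Ico, mem_Ioc]; omega
  have hcount : #{k ∈ Ioc (x - 1) (y - 1) | B ∣ k} + (x - 1) / B = (y - 1) / B := by
    rw [← Nat.Ioc_filter_dvd_card_eq_div, ← Nat.Ioc_filter_dvd_card_eq_div, add_comm,
      ← card_union_of_disjoint (disjoint_filter_filter (Ioc_disjoint_Ioc_of_le le_rfl)),
      ← filter_union, Ioc_union_Ioc_eq_Ioc (Nat.zero_le _) (by omega)]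
  rw [edgeCost, min_eq_left hxy, max_eq_right hxy, sum_boole, Nat.cast_id, hIco]
  omega

theorem edgeCost_eq_zero_iff {B x y : ℕ} (hx : 1 ≤ x) (hy : 1 ≤ y) :
    edgeCost B x y = 0 ↔ (x - 1) / B = (y - 1) / B := by
  rcases le_total x y with hxy | hyx
  · exact edgeCost_eq_zero_iff_of_le hx hxy
  · rw [edgeCost_comm, edgeCost_eq_zero_iff_of_le hy hyx, eq_comm]

theorem embeddingCost_eq_zero_iff {a f : ℕ → ℕ} {m B N : ℕ} (hN : prefixSum a m ≤ N)
    (hf : Set.MapsTo f (Set.Icc 1 N) (Set.Icc 1 N)) :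
    embeddingCost a m B N f = 0 ↔ ∀ i ∈ Icc 1 m, ∀ j, j ∈ itemSection a i →
      j + 1 ∈ itemSection a i → (f j - 1) / B = (f (j + 1) - 1) / B := by
  have hpos : ∀ j ∈ Icc 1 (N - 1), 1 ≤ f j ∧ 1 ≤ f (j + 1) := fun j hj => by
    simp only [mem_Icc] at hj
    exact ⟨(hf (show j ∈ Set.Icc 1 N from ⟨hj.1, by omega⟩)).1,
      (hf (show j + 1 ∈ Set.Icc 1 N from ⟨by omega, by omega⟩)).1⟩
  rw [embeddingCost, sum_eq_zero_iff]
  constructor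
  · intro h i hi j hj hj'
    have hpi := prefixSum_sub_one_add (a := a) (mem_Icc.1 hi).1
    have hpm := prefixSum_mono (a := a) (mem_Icc.1 hi).2
    simp only [itemSection, mem_Ioc] at hj hj'
    have hjN : j ∈ Icc 1 (N - 1) := mem_Icc.2 ⟨by omega, by omega⟩
    have hdemand : demand a m j = 1 := if_pos ⟨i, hi, by omega, by omega⟩
    rw [← edgeCost_eq_zero_iff (hpos j hjN).1 (hpos j hjN).2]
    simpa [hdemand] using h j hjN
  · intro h j hj
    unfold demand
    split_ifs with hdemand
    · obtain ⟨i, hi, hj₁, hj₂⟩ := hdemand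
      have hpi := prefixSum_sub_one_add (a := a) (mem_Icc.1 hi).1
      rw [one_mul, edgeCost_eq_zero_iff (hpos j hj).1 (hpos j hj).2]
      exact h i hi j (by simp only [itemSection, mem_Ioc]; omega)
        (by simp only [itemSection, mem_Ioc]; omega)
    · exact zero_mul _

theorem exists_bijOn_sections_in_blocks {a g : ℕ → ℕ} {m B K : ℕ}
    (hsum : prefixSum a m ≤ B * K)
    (hg : ∀ i ∈ Icc 1 m, g i ∈ Icc 1 K)
    (hload : ∀ k ∈ Icc 1 K, ∑ i ∈ (Icc 1 m).filter (fun i => g i = k), a i ≤ B) :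
    ∃ f : ℕ → ℕ, Set.BijOn f (Set.Icc 1 (B * K)) (Set.Icc 1 (B * K)) ∧
      ∀ i ∈ Icc 1 m, ∀ j ∈ itemSection a i, (f j - 1) / B = g i - 1 := by
  set s := (Icc 1 m).biUnion (itemSection a)
  set β : ℕ → ℕ := fun j => g (itemOf a j) - 1
  have hβ : ∀ i ∈ Icc 1 m, ∀ j ∈ itemSection a i, β j = g i - 1 := fun i hi j hj => by
    simp only [β, itemOf_eq (mem_Icc.1 hi).1 hj]
  have hcap : ∀ x ∈ s, #{y ∈ s | β y = β x} ≤ B := by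
    intro x hx
    obtain ⟨i, hi, hxi⟩ := mem_biUnion.1 hx
    have hgi := mem_Icc.1 (hg i hi)
    calc #{y ∈ s | β y = β x}
        ≤ #(((Icc 1 m).filter (fun i' => g i' = g i)).biUnion (itemSection a)) := by
          refine card_le_card fun y hy => ?_
          obtain ⟨hys, hyx⟩ := mem_filter.1 hy
          obtain ⟨i', hi', hyi'⟩ := mem_biUnion.1 hys
          have hgi' := mem_Icc.1 (hg i' hi')
          rw [hβ i hi x hxi, hβ i' hi' y hyi'] at hyx
          exact mem_biUnion.2 ⟨i', mem_filter.2 ⟨hi', by omega⟩, hyi'⟩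
      _ = ∑ i' ∈ (Icc 1 m).filter (fun i' => g i' = g i), a i' :=
          card_biUnion_itemSection fun i' hi' => (mem_Icc.1 (mem_filter.1 hi').1).1
      _ ≤ B := hload _ (hg i hi)
  have hβK : ∀ x ∈ s, β x < K := fun x hx => by
    obtain ⟨i, hi, hxi⟩ := mem_biUnion.1 hx
    have hgi := mem_Icc.1 (hg i hi)
    rw [hβ i hi x hxi]
    omega
  have hsN : s ⊆ Icc 1 (B * K) := biUnion_subset.2 fun i hi =>
    (itemSection_subset (mem_Icc.1 hi).2).trans (Icc_subset_Icc_right hsum)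
  obtain ⟨f, hf, hfs⟩ := exists_bijOn_eqOn_of_injOn hsN (mapsTo_packSlot hcap hβK)
    (injOn_packSlot hcap)
  refine ⟨f, by simpa using hf, fun i hi j hj => ?_⟩
  have hjs : j ∈ s := mem_biUnion.2 ⟨i, hi, hj⟩
  rw [hfs hjs, packSlot_sub_one_div hjs (hcap j hjs), hβ i hi j hj]

theorem exists_packing_of_sections_in_blocks {a f : ℕ → ℕ} {m B K : ℕ} (hB : 0 < B)
    (ha : ∀ i ∈ Icc 1 m, 1 ≤ a i) (hsum : prefixSum a m ≤ B * K)
    (hf : Set.MapsTo f (Set.Icc 1 (B * K)) (Set.Icc 1 (B * K)))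
    (hinj : Set.InjOn f (Set.Icc 1 (B * K)))
    (hblock : ∀ i ∈ Icc 1 m, ∀ j ∈ itemSection a i,
      (f j - 1) / B = (f (prefixSum a (i - 1) + 1) - 1) / B) :
    ∃ g : ℕ → ℕ, (∀ i ∈ Icc 1 m, g i ∈ Icc 1 K) ∧
      ∀ k ∈ Icc 1 K, ∑ i ∈ (Icc 1 m).filter (fun i => g i = k), a i ≤ B := by
  set g : ℕ → ℕ := fun i => (f (prefixSum a (i - 1) + 1) - 1) / B + 1
  have hfirst : ∀ i ∈ Icc 1 m, prefixSum a (i - 1) + 1 ∈ itemSection a i := fun i hi => by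
    have := prefixSum_sub_one_add (a := a) (mem_Icc.1 hi).1
    have := ha i hi
    simp only [itemSection, mem_Ioc]
    omega
  have hsN : ∀ i ∈ Icc 1 m, itemSection a i ⊆ Icc 1 (B * K) := fun i hi =>
    (itemSection_subset (mem_Icc.1 hi).2).trans (Icc_subset_Icc_right hsum)
  refine ⟨g, fun i hi => ?_, fun k hk => ?_⟩
  · have hfi : f (prefixSum a (i - 1) + 1) ∈ Icc 1 (B * K) := by
      rw [← mem_coe, coe_Icc]
      exact hf (by rw [← coe_Icc]; exact hsN i hi (hfirst i hi))
    rw [mem_Icc] at hfi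
    have : (f (prefixSum a (i - 1) + 1) - 1) / B < K :=
      (Nat.div_lt_iff_lt_mul hB).2 (by rw [mul_comm]; omega)
    exact mem_Icc.2 ⟨Nat.le_add_left _ _, this⟩
  · set S := (Icc 1 m).filter (fun i => g i = k)
    have hS : ∀ i ∈ S, i ∈ Icc 1 m := fun i hi => (mem_filter.1 hi).1
    have hSN : S.biUnion (itemSection a) ⊆ Icc 1 (B * K) :=
      biUnion_subset.2 fun i hi => hsN i (hS i hi)
    calc ∑ i ∈ S, a i = #(S.biUnion (itemSection a)) :=
          (card_biUnion_itemSection fun i hi => (mem_Icc.1 (hS i hi)).1).symm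
      _ = #((S.biUnion (itemSection a)).image f) :=
          (card_image_of_injOn (hinj.mono (by rw [← coe_Icc]; exact coe_subset.2 hSN))).symm
      _ ≤ B := by
          refine card_le_of_forall_sub_one_div_eq (c := k - 1) hB fun y hy => ?_
          obtain ⟨j, hj, rfl⟩ := mem_image.1 hy
          obtain ⟨i, hi, hji⟩ := mem_biUnion.1 hj
          have hgk : g i = k := (mem_filter.1 hi).2
          refine ⟨(hf (by rw [← coe_Icc]; exact hSN hj)).1, ?_⟩
          rw [hblock i (hS i hi) j hji, ← hgk]
          rfl

theorem binPacking_iff_line_on_line_wVNE_general (m B K : ℕ) (hB : 1 ≤ B)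
    (a : ℕ → ℕ) (ha : ∀ i ∈ Finset.Icc 1 m, 1 ≤ a i)
    (hsum : ∑ i ∈ Finset.Icc 1 m, a i ≤ B * K) :
    (∃ g : ℕ → ℕ, (∀ i ∈ Finset.Icc 1 m, g i ∈ Finset.Icc 1 K) ∧
        ∀ k ∈ Finset.Icc 1 K,
          ∑ i ∈ (Finset.Icc 1 m).filter (fun i => g i = k), a i ≤ B) ↔
    (∃ f : ℕ → ℕ, Set.BijOn f (Set.Icc 1 (B * K)) (Set.Icc 1 (B * K)) ∧
      ∑ j ∈ Finset.Icc 1 (B * K - 1),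
        (if ∃ i ∈ Finset.Icc 1 m,
              (∑ l ∈ Finset.Icc 1 (i - 1), a l) + 1 ≤ j ∧
              j + 1 ≤ (∑ l ∈ Finset.Icc 1 (i - 1), a l) + a i
          then 1 else 0) *
        (∑ k ∈ Finset.Ico (min (f j) (f (j + 1))) (max (f j) (f (j + 1))),
          if B ∣ k then 1 else 0) = 0) := by
  constructor
  · rintro ⟨g, hg, hload⟩
    obtain ⟨f, hf, hblock⟩ := exists_bijOn_sections_in_blocks hsum hg hload
    refine ⟨f, hf, (embeddingCost_eq_zero_iff hsum hf.mapsTo).2 fun i hi j hj hj' => ?_⟩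
    rw [hblock i hi j hj, hblock i hi (j + 1) hj']
  · rintro ⟨f, hf, hcost⟩
    have hadjacent := (embeddingCost_eq_zero_iff hsum hf.mapsTo).1 hcost
    exact exists_packing_of_sections_in_blocks hB ha hsum hf.mapsTo hf.injOn
      fun i hi => forall_mem_Ioc_eq_of_succ (hadjacent i hi)

/-- Correctness of the reduction of bin packing to wVNE of a linear
virtual network on a linear physical network.  Vertices are `1,…,N` with `N = B·K`;
the virtual edge `{j, j+1}` has demand `1` iff `j` and `j+1` lie in the same element
section, and the physical edge `{k, k+1}` has cost `1` iff `B ∣ k`.  The instance of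
bin packing is solvable iff there is a bijection of `{1,…,N}` of embedding cost `0`. -/
theorem binPacking_iff_line_on_line_wVNE (m B K : ℕ) (hm : 1 ≤ m) (hB : 1 ≤ B)
    (hK : 1 ≤ K) (a : ℕ → ℕ) (ha : ∀ i ∈ Finset.Icc 1 m, 1 ≤ a i)
    (hsum : ∑ i ∈ Finset.Icc 1 m, a i ≤ B * K) :
    (∃ g : ℕ → ℕ, (∀ i ∈ Finset.Icc 1 m, g i ∈ Finset.Icc 1 K) ∧
        ∀ k ∈ Finset.Icc 1 K,
          ∑ i ∈ (Finset.Icc 1 m).filter (fun i => g i = k), a i ≤ B) ↔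
    (∃ f : ℕ → ℕ, Set.BijOn f (Set.Icc 1 (B * K)) (Set.Icc 1 (B * K)) ∧
      ∑ j ∈ Finset.Icc 1 (B * K - 1),
        (if ∃ i ∈ Finset.Icc 1 m,
              (∑ l ∈ Finset.Icc 1 (i - 1), a l) + 1 ≤ j ∧
              j + 1 ≤ (∑ l ∈ Finset.Icc 1 (i - 1), a l) + a i
          then 1 else 0) *
        (∑ k ∈ Finset.Ico (min (f j) (f (j + 1))) (max (f j) (f (j + 1))),
          if B ∣ k then 1 else 0) = 0) :=
  binPacking_iff_line_on_line_wVNE_general m B K hB a ha hsum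
end

section
/- Let G be a connected graph on n vertices with nonnegative edge costs and let d denote the weighted shortest-path distance in G. Let the virtual network be a star with a center and n − 1 leaves, where leaf i has demand w_i ≥ 0 and w_1 ≤ w_2 ≤ … ≤ w_{n−1}. For each vertex j of G, let δ_j(1) ≥ δ_j(2) ≥ … ≥ δ_j(n−1) be the nonincreasing rearrangement of the multiset of distances {d(j, v) : v ∈ V(G), v ≠ j}. Then the minimum over all bijections f from the star's vertices to V(G) of the embedding cost ∑_{i=1}^{n−1} w_i · d(f(center), f(leaf_i)) equals min_{j ∈ V(G)} ∑_{i=1}^{n−1} w_i · δ_j(i). -/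
open Finset

/-- The weighted shortest-path distance in a graph `G` with edge costs `t`:
the infimum over all walks from `u` to `v` of the total cost of their edges
(each traversal counted). -/
noncomputable def weightedDist {V : Type} (G : SimpleGraph V) (t : Sym2 V → ℝ)
    (u v : V) : ℝ :=
  sInf {x : ℝ | ∃ p : G.Walk u v, x = (p.edges.map t).sum}

/-- Correctness of the greedy (rearrangement-inequality) algorithm for
wVNE of a star virtual network.  `G` is a connected physical network on `n` vertices
with nonnegative edge costs `t` and weighted shortest-path distance `weightedDist`.
The virtual network is a star whose `n − 1` leaves have nondecreasing demands
`w₁ ≤ … ≤ w_{n−1} (≥ 0)`.  For each vertex `j`, `δ j` enumerates the vertices `≠ j`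
so that their distances to `j` are nonincreasing.  Then the minimum embedding cost
over all bijections (center placed at `f none`, leaf `i` at `f (some i)`) equals
`min_j ∑ i, w i · δ_j(i)`. -/
theorem star_wVNE_greedy {V : Type} [Fintype V] [DecidableEq V] (G : SimpleGraph V)
    (hconn : G.Connected) (t : Sym2 V → ℝ) (ht : ∀ e, 0 ≤ t e)
    (n : ℕ) (hn : 1 ≤ n) (hcard : Fintype.card V = n)
    (w : Fin (n - 1) → ℝ) (hw0 : ∀ i, 0 ≤ w i) (hw : Monotone w)
    (δ : (j : V) → Fin (n - 1) ≃ {v : V // v ≠ j})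
    (hδ : ∀ j : V, Antitone fun i => weightedDist G t j ((δ j i) : V)) :
    sInf {c : ℝ | ∃ f : Option (Fin (n - 1)) ≃ V,
        c = ∑ i : Fin (n - 1), w i * weightedDist G t (f none) (f (some i))} =
    sInf {c : ℝ | ∃ j : V,
        c = ∑ i : Fin (n - 1), w i * weightedDist G t j ((δ j i) : V)} := by
  have hV : Nonempty V := by
    rw [← Fintype.card_pos_iff, hcard]; omega
  obtain ⟨v0⟩ := hV
  set A : Set ℝ := {c : ℝ | ∃ f : Option (Fin (n - 1)) ≃ V,
      c = ∑ i : Fin (n - 1), w i * weightedDist G t (f none) (f (some i))} with hA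
  set B : Set ℝ := {c : ℝ | ∃ j : V,
      c = ∑ i : Fin (n - 1), w i * weightedDist G t j ((δ j i) : V)} with hB
  -- membership of greedy embeddings in A
  have hBA : B ⊆ A := by
    rintro c ⟨j, rfl⟩
    refine ⟨((Equiv.optionSubtype j).symm (δ j) : { e : Option (Fin (n-1)) ≃ V // e none = j }), ?_⟩
    have h0 : (((Equiv.optionSubtype j).symm (δ j) :
        { e : Option (Fin (n-1)) ≃ V // e none = j }) : Option (Fin (n-1)) ≃ V) none = j :=
      ((Equiv.optionSubtype j).symm (δ j)).property
    rw [h0]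
    refine Finset.sum_congr rfl fun i _ => ?_
    rw [Equiv.optionSubtype_symm_apply_apply_some]
  have hAfin : A.Finite := by
    have : A = Set.range (fun f : Option (Fin (n - 1)) ≃ V =>
        ∑ i : Fin (n - 1), w i * weightedDist G t (f none) (f (some i))) := by
      ext c; simp [hA, Set.range, eq_comm]
    rw [this]; exact Set.finite_range _
  have hBne : B.Nonempty := ⟨_, ⟨v0, rfl⟩⟩
  have hAne : A.Nonempty := hBne.mono hBA
  have hAbdd : BddBelow A := hAfin.bddBelow
  have hBbdd : BddBelow B := hAbdd.mono hBA
  refine le_antisymm (le_csInf hBne fun b hb => csInf_le hAbdd (hBA hb)) ?_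
  refine le_csInf hAne ?_
  rintro a ⟨f, rfl⟩
  set j := f none with hj
  set e : Fin (n - 1) ≃ {v : V // v ≠ j} := Equiv.optionSubtype j ⟨f, rfl⟩ with he
  set σ : Equiv.Perm (Fin (n - 1)) := e.trans (δ j).symm with hσ
  set D : Fin (n - 1) → ℝ := fun i => weightedDist G t j ((δ j i) : V) with hD
  have hanti : Antivary w D := by
    intro i k h
    rcases le_total i k with hik | hki
    · exact absurd h (not_lt.2 (hδ j hik))
    · exact hw hki
  have key : ∑ i : Fin (n - 1), w i * D i ≤ ∑ i : Fin (n - 1), w i * D (σ i) :=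
    hanti.sum_mul_le_sum_mul_comp_perm (σ := σ)
  have heq : ∀ i, D (σ i) = weightedDist G t j (f (some i)) := by
    intro i
    have : δ j (σ i) = e i := by simp [hσ]
    simp only [hD, this]
    rfl
  refine le_trans (csInf_le hBbdd ⟨j, rfl⟩) ?_
  calc ∑ i : Fin (n - 1), w i * D i ≤ ∑ i : Fin (n - 1), w i * D (σ i) := key
    _ = ∑ i : Fin (n - 1), w i * weightedDist G t (f none) (f (some i)) := by
        refine Finset.sum_congr rfl fun i _ => ?_
        rw [heq i, hj]
end

section
/- Let a_1,…,a_m, B, K be positive integers with ∑ a_i ≤ B·K. Let the physical network be a 2-tiered star with vertex set {R} ∪ ({1,…,K} × {1,…,B}), where each edge from the root R to a bin subtree has cost 1 and all edges inside a bin subtree have cost 0 (so the shortest-path distance is 0 between two vertices in the same bin subtree, 1 between R and any bin vertex, and 2 between vertices in different bin subtrees). Let the virtual network be a 2-tiered star with root r, and for each i a group consisting of a center g_i with a_i − 1 leaf children, where every edge inside a group has demand 1 and the edge r–g_i has demand 0, together with B·K − ∑ a_i additional leaves attached to r by demand-0 edges. Then the indices {1,…,m} can be partitioned into K subsets each with ∑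 a_i at most B if and only if there exists a bijection f from the virtual vertices to the physical vertices with embedding cost ∑_{uv ∈ E(VN)} w(uv) · dist(f(u), f(v)) = 0. (This is the correctness of the reduction showing that wVNE of a 2-star virtual network on a 2-star physical network is NP-complete.) -/
/-!
A zero-cost embedding keeps every group inside one bin subtree: the two ends of a demand-1 edge
get the same first coordinate, and neither can sit at the physical root, since the other end
would then be the root too. After swapping the root with its image, a zero-cost embedding is
therefore an injective placement of the group vertices into the `B·K` bin slots that keeps each
group in one bin; conversely such a placement extends to a bijection, because the padding leaves
give both networks `B·K + 1` vertices. Finally, such placements exist exactly when the items can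
be packed, since bin `k` must hold the `∑_{g i = k} aᵢ` vertices of its groups in `B` slots.
-/

open Classical Finset

theorem Set.InjOn.exists_bijOn_extend {α β : Type*} {h : α → β} {s₀ : Set α} {s : Finset α}
    {t : Finset β} (hinj : Set.InjOn h s₀) (hmaps : Set.MapsTo h s₀ t) (hs₀ : s₀ ⊆ s)
    (hcard : #s = #t) : ∃ f, Set.BijOn f s t ∧ Set.EqOn f h s₀ := by
  obtain ⟨e, he⟩ := Set.MapsTo.exists_equiv_extend_of_card_eq (α := s)
    (s := Subtype.val ⁻¹' s₀) (f := h ∘ Subtype.val) (by simpa using hcard)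
    (fun x hx => hmaps hx) (hinj.comp Subtype.val_injective.injOn fun _ hx => hx)
  refine ⟨fun x => if hx : x ∈ s then e ⟨x, hx⟩ else h x,
    ⟨fun x hx => ?_, fun x hx y hy hxy => ?_, fun y hy => ?_⟩, fun x hx => ?_⟩
  · simp [Finset.mem_coe.1 hx]
  · simpa [Finset.mem_coe.1 hx, Finset.mem_coe.1 hy, Subtype.ext_iff] using hxy
  · obtain ⟨⟨x, hx⟩, hex⟩ := e.surjective ⟨y, hy⟩
    exact ⟨x, hx, by simp [hx, hex]⟩
  · exact (dif_pos (Finset.mem_coe.1 (hs₀ hx))).trans (he _ hx)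

section GroupPlacement

variable {ι κ β : Type*} [DecidableEq ι] [DecidableEq κ]

def groupVertices (a : ι → ℕ) (s : Finset ι) : Finset (ι × ℕ) :=
  s.biUnion fun i => {i} ×ˢ Iic (a i - 1)

@[simp]
lemma mem_groupVertices {a : ι → ℕ} {s : Finset ι} {p : ι × ℕ} :
    p ∈ groupVertices a s ↔ p.1 ∈ s ∧ p.2 ≤ a p.1 - 1 := by
  obtain ⟨i, j⟩ := p
  simp [groupVertices]

lemma card_groupVertices (a : ι → ℕ) (s : Finset ι) :
    #(groupVertices a s) = ∑ i ∈ s, (a i - 1 + 1) := by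
  rw [groupVertices, card_biUnion]
  · simp
  · intro i _ j _ hij
    simp [Function.onFun, disjoint_left, hij.symm]

lemma sum_le_card_groupVertices (a : ι → ℕ) (s : Finset ι) :
    ∑ i ∈ s, a i ≤ #(groupVertices a s) :=
  (card_groupVertices a s).symm ▸ sum_le_sum fun _ _ => le_tsub_add

lemma groupVertices_mono (a : ι → ℕ) {s t : Finset ι} (h : s ⊆ t) :
    groupVertices a s ⊆ groupVertices a t :=
  biUnion_subset_biUnion_of_subset_left _ h

def IsGroupPlacement (a : ι → ℕ) (s : Finset ι) (bins : Finset κ) (slots : Finset β)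
    (h : ι × ℕ → κ × β) : Prop :=
  Set.InjOn h (groupVertices a s) ∧
    ∀ p ∈ groupVertices a s, h p ∈ bins ×ˢ slots ∧ (h p).1 = (h (p.1, 0)).1

variable {a : ι → ℕ} {s : Finset ι} {bins : Finset κ} {slots : Finset β}

lemma exists_isGroupPlacement_of_packing [Nonempty β] {g : ι → κ} (ha : ∀ i ∈ s, 1 ≤ a i)
    (hg : ∀ i ∈ s, g i ∈ bins) (hload : ∀ k ∈ bins, ∑ i ∈ s with g i = k, a i ≤ #slots) :
    ∃ h, IsGroupPlacement a s bins slots h := by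
  have hslots : ∀ k, ∃ e : ι × ℕ → β, k ∈ bins →
      Set.InjOn e (groupVertices a {i ∈ s | g i = k}) ∧
        ∀ p ∈ groupVertices a {i ∈ s | g i = k}, e p ∈ slots := by
    intro k
    by_cases hk : k ∈ bins
    · have hcard : #(groupVertices a {i ∈ s | g i = k}) ≤ #slots := by
        rw [card_groupVertices]
        refine le_of_eq_of_le (sum_congr rfl fun i hi => ?_) (hload k hk)
        have := ha i (mem_filter.1 hi).1
        omega
      obtain ⟨e, hmaps, hinj⟩ :=
        (groupVertices a {i ∈ s | g i = k}).finite_toSet.exists_injOn_of_encard_le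
          (t := (slots : Set β)) (by simpa [Set.encard_coe_eq_coe_finsetCard] using hcard)
      exact ⟨e, fun _ => ⟨hinj, fun p hp => hmaps hp⟩⟩
    · exact ⟨fun _ => Classical.arbitrary β, fun hk' => absurd hk' hk⟩
  choose e he using hslots
  have hbin : ∀ p ∈ groupVertices a s, p ∈ groupVertices a {i ∈ s | g i = g p.1} := by
    simp +contextual
  refine ⟨fun p => (g p.1, e (g p.1) p), fun p hp q hq hpq => ?_, fun p hp => ?_⟩
  · obtain ⟨hgpq, hepq⟩ := Prod.mk.inj hpq
    have hp' := hbin p hp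
    have hq' := hgpq ▸ hbin q hq
    exact (he _ (hg _ (mem_groupVertices.1 hp).1)).1 hp' hq' (hgpq ▸ hepq)
  · have hgp := hg _ (mem_groupVertices.1 hp).1
    exact ⟨mem_product.2 ⟨hgp, (he _ hgp).2 p (hbin p hp)⟩, rfl⟩

lemma sum_le_card_of_isGroupPlacement {h : ι × ℕ → κ × β}
    (hh : IsGroupPlacement a s bins slots h) (k : κ) :
    ∑ i ∈ s with (h (i, 0)).1 = k, a i ≤ #slots := by
  set t := {i ∈ s | (h (i, 0)).1 = k}
  have hmaps : ∀ p ∈ groupVertices a t, h p ∈ ({k} : Finset κ) ×ˢ slots := by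
    intro p hp
    obtain ⟨hpt, hp₂⟩ := mem_groupVertices.1 hp
    obtain ⟨hp_s, hp_k⟩ := mem_filter.1 hpt
    obtain ⟨hp_mem, hp_bin⟩ := hh.2 p (mem_groupVertices.2 ⟨hp_s, hp₂⟩)
    exact mem_product.2 ⟨mem_singleton.2 (hp_bin.trans hp_k), (mem_product.1 hp_mem).2⟩
  calc ∑ i ∈ t, a i ≤ #(groupVertices a t) := sum_le_card_groupVertices a t
    _ ≤ #(({k} : Finset κ) ×ˢ slots) :=
      card_le_card_of_injOn h hmaps (hh.1.mono (groupVertices_mono a (filter_subset _ _)))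
    _ = #slots := by simp

theorem exists_packing_iff_exists_isGroupPlacement [Nonempty β] (ha : ∀ i ∈ s, 1 ≤ a i) :
    (∃ g : ι → κ, (∀ i ∈ s, g i ∈ bins) ∧ ∀ k ∈ bins, ∑ i ∈ s with g i = k, a i ≤ #slots) ↔
      ∃ h, IsGroupPlacement a s bins slots h := by
  refine ⟨fun ⟨g, hg, hload⟩ => exists_isGroupPlacement_of_packing ha hg hload,
    fun ⟨h, hh⟩ => ⟨fun i => (h (i, 0)).1, fun i hi => ?_,
      fun k _ => sum_le_card_of_isGroupPlacement hh k⟩⟩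
  exact (mem_product.1 (hh.2 (i, 0) (by simpa using hi)).1).1

end GroupPlacement

section TwoStar

def physicalVertices (K B : ℕ) : Finset (ℕ × ℕ) :=
  insert (0, 0) (Icc 1 K ×ˢ Icc 1 B)

def virtualVertices (m B K : ℕ) (a : ℕ → ℕ) : Finset (ℕ × ℕ) :=
  insert (0, 0) (groupVertices a (Icc 1 m) ∪ {m + 1} ×ˢ Icc 1 (B * K - ∑ i ∈ Icc 1 m, a i))

variable {m B K : ℕ} {a : ℕ → ℕ}

lemma coe_physicalVertices :
    (physicalVertices K B : Set (ℕ × ℕ)) = insert (0, 0) (Set.Icc 1 K ×ˢ Set.Icc 1 B) := by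
  simp [physicalVertices]

lemma coe_virtualVertices :
    (virtualVertices m B K a : Set (ℕ × ℕ)) =
      {(0, 0)} ∪ {p : ℕ × ℕ | 1 ≤ p.1 ∧ p.1 ≤ m ∧ p.2 ≤ a p.1 - 1} ∪
        {p : ℕ × ℕ | p.1 = m + 1 ∧ 1 ≤ p.2 ∧ p.2 ≤ B * K - ∑ i ∈ Icc 1 m, a i} := by
  ext ⟨i, j⟩
  simp only [virtualVertices, coe_insert, coe_union, Set.mem_insert_iff, Set.mem_union,
    mem_coe, mem_groupVertices, mem_Icc, mem_product, mem_singleton, Set.mem_ofPred_eq,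
    Set.singleton_union]
  tauto

lemma card_physicalVertices : #(physicalVertices K B) = B * K + 1 := by
  rw [physicalVertices, card_insert_of_notMem (by simp), card_product, Nat.card_Icc,
    Nat.card_Icc, Nat.add_sub_cancel, Nat.add_sub_cancel, mul_comm]

lemma card_virtualVertices (ha : ∀ i ∈ Icc 1 m, 1 ≤ a i)
    (hsum : ∑ i ∈ Icc 1 m, a i ≤ B * K) : #(virtualVertices m B K a) = B * K + 1 := by
  have hgroups : #(groupVertices a (Icc 1 m)) = ∑ i ∈ Icc 1 m, a i := by
    rw [card_groupVertices]
    exact sum_congr rfl fun i hi => Nat.sub_add_cancel (ha i hi)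
  rw [virtualVertices, card_insert_of_notMem (by simp), card_union_of_disjoint, hgroups,
    card_product, card_singleton, Nat.card_Icc, Nat.add_sub_cancel, one_mul,
    Nat.add_sub_cancel' hsum]
  exact disjoint_left.2 fun p hp hp' => by
    simp only [mem_groupVertices, mem_Icc, mem_product, mem_singleton] at hp hp'
    omega

lemma eq_zero_of_mem_physicalVertices {x : ℕ × ℕ} (hx : x ∈ physicalVertices K B)
    (hx₁ : x.1 = 0) : x = (0, 0) := by
  rcases mem_insert.1 hx with rfl | hx
  · rfl
  · have := (mem_Icc.1 (mem_product.1 hx).1).1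
    omega

lemma twoStarCost_eq_zero_iff (f : ℕ × ℕ → ℕ × ℕ) :
    ∑ i ∈ Icc 1 m, ∑ j ∈ Icc 1 (a i - 1),
        (if (f (i, 0)).1 = (f (i, j)).1 then 0
         else if (f (i, 0)).1 = 0 ∨ (f (i, j)).1 = 0 then 1 else 2) = 0 ↔
      ∀ i ∈ Icc 1 m, ∀ j ∈ Icc 1 (a i - 1), (f (i, 0)).1 = (f (i, j)).1 := by
  simp only [sum_eq_zero_iff]
  refine forall₂_congr fun i _ => forall₂_congr fun j _ => ?_
  split_ifs <;> simp_all

lemma exists_bijOn_of_isGroupPlacement (ha : ∀ i ∈ Icc 1 m, 1 ≤ a i)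
    (hsum : ∑ i ∈ Icc 1 m, a i ≤ B * K) {h : ℕ × ℕ → ℕ × ℕ}
    (hh : IsGroupPlacement a (Icc 1 m) (Icc 1 K) (Icc 1 B) h) :
    ∃ f : ℕ × ℕ → ℕ × ℕ, Set.BijOn f (virtualVertices m B K a) (physicalVertices K B) ∧
      ∀ i ∈ Icc 1 m, ∀ j ∈ Icc 1 (a i - 1), (f (i, 0)).1 = (f (i, j)).1 := by
  set G := groupVertices a (Icc 1 m)
  have hroot : ((0, 0) : ℕ × ℕ) ∉ G := by simp [G]
  set h' := Function.update h (0, 0) (0, 0)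
  have hh'_root : h' (0, 0) = (0, 0) := Function.update_self _ _ _
  have hh' : Set.EqOn h' h G := fun p hp =>
    Function.update_of_ne (ne_of_mem_of_not_mem hp hroot) _ _
  have hbins : ∀ p ∈ G, h p ∈ Icc 1 K ×ˢ Icc 1 B := fun p hp => (hh.2 p hp).1
  have hinj : Set.InjOn h' (insert (0, 0) G) := by
    rw [Set.injOn_insert (by simpa using hroot)]
    refine ⟨hh.1.congr hh'.symm, ?_⟩
    rintro ⟨p, hp, hp0⟩
    have := hbins p hp
    rw [hh' hp, hh'_root] at hp0
    simp [hp0] at this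
  have hmaps : Set.MapsTo h' (insert (0, 0) G) (physicalVertices K B) := by
    rintro p (rfl | hp)
    · simp [hh'_root, physicalVertices]
    · rw [hh' hp]
      exact mem_insert_of_mem (hbins p hp)
  obtain ⟨f, hf, hfh⟩ := hinj.exists_bijOn_extend hmaps
    (by simpa [virtualVertices] using Set.insert_subset_insert Set.subset_union_left)
    ((card_virtualVertices ha hsum).trans card_physicalVertices.symm)
  refine ⟨f, hf, fun i hi j hj => ?_⟩
  have hi0 : (i, 0) ∈ G := by simp [G, hi]
  have hij : (i, j) ∈ G := by simp_all [G]
  rw [hfh (Set.mem_insert_of_mem _ hi0), hfh (Set.mem_insert_of_mem _ hij), hh' hi0, hh' hij]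
  exact (hh.2 _ hij).2.symm

variable {f : ℕ × ℕ → ℕ × ℕ}
  (hf : Set.BijOn f (virtualVertices m B K a) (physicalVertices K B))
  (hcost : ∀ i ∈ Icc 1 m, ∀ j ∈ Icc 1 (a i - 1), (f (i, 0)).1 = (f (i, j)).1)
include hf hcost

lemma apply_center_ne_zero_and_apply_leaf_ne_zero {i j : ℕ} (hi : i ∈ Icc 1 m)
    (hj : j ∈ Icc 1 (a i - 1)) :
    f (i, 0) ≠ (0, 0) ∧ f (i, j) ≠ (0, 0) := by
  have hmem₀ : (i, 0) ∈ virtualVertices m B K a := by simp_all [virtualVertices]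
  have hmem : (i, j) ∈ virtualVertices m B K a := by simp_all [virtualVertices]
  have hne : f (i, 0) ≠ f (i, j) := hf.injOn.ne hmem₀ hmem (by simp at hj ⊢; omega)
  have hsame := hcost i hi j hj
  constructor
  · intro h₀
    exact hne (h₀.trans (eq_zero_of_mem_physicalVertices (hf.mapsTo hmem) (by simp_all)).symm)
  · intro h₀
    exact hne ((eq_zero_of_mem_physicalVertices (hf.mapsTo hmem₀) (by simp_all)).trans h₀.symm)

lemma exists_isGroupPlacement_of_bijOn :
    ∃ h, IsGroupPlacement a (Icc 1 m) (Icc 1 K) (Icc 1 B) h := by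
  have hroot : (0, 0) ∈ virtualVertices m B K a := mem_insert_self _ _
  set F := Equiv.swap (0, 0) (f (0, 0)) ∘ f
  have hF : Set.BijOn F (virtualVertices m B K a \ {(0, 0)})
      (Icc 1 K ×ˢ Icc 1 B : Finset (ℕ × ℕ)) := by
    have hswap := Equiv.bijOn_swap (mem_insert_self _ _) (hf.mapsTo hroot)
    simpa [F, physicalVertices] using (hswap.comp hf).sdiff_singleton hroot
  have hG : (groupVertices a (Icc 1 m) : Set (ℕ × ℕ)) ⊆
      virtualVertices m B K a \ {(0, 0)} := by
    intro p hp
    simp_all [virtualVertices]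
  have hFf : ∀ p ∈ groupVertices a (Icc 1 m), f p ≠ (0, 0) → F p = f p := fun p hp hp₀ =>
    Equiv.swap_apply_of_ne_of_ne hp₀ (hf.injOn.ne (hG hp).1 hroot (hG hp).2)
  refine ⟨F, hF.injOn.mono hG, fun p hp => ⟨hF.mapsTo (hG hp), ?_⟩⟩
  obtain ⟨i, j⟩ := p
  obtain ⟨hi, hj⟩ := mem_groupVertices.1 hp
  rcases Nat.eq_zero_or_pos j with rfl | hj₀
  · rfl
  have hj' : j ∈ Icc 1 (a i - 1) := mem_Icc.2 ⟨hj₀, hj⟩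
  obtain ⟨h₀, h₁⟩ := apply_center_ne_zero_and_apply_leaf_ne_zero hf hcost hi hj'
  rw [hFf _ hp h₁, hFf _ (by simpa using hi) h₀]
  exact (hcost i hi j hj').symm

end TwoStar

/-- Both roots are `(0, 0)`; bin `k` consists of the physical vertices `(k, b)`, group `i` of
the virtual centre `(i, 0)` and leaves `(i, j)`, and the padding leaves are `(m + 1, ℓ)`. The
`if`-expression is the physical distance, and only the demand-1 edges `(i, 0)`–`(i, j)` appear
in the cost, all other edges having demand 0. -/
theorem binPacking_iff_twoStar_on_twoStar_wVNE_general (m B K : ℕ) (a : ℕ → ℕ)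
    (ha : ∀ i ∈ Finset.Icc 1 m, 1 ≤ a i)
    (hsum : ∑ i ∈ Finset.Icc 1 m, a i ≤ B * K) :
    (∃ g : ℕ → ℕ, (∀ i ∈ Finset.Icc 1 m, g i ∈ Finset.Icc 1 K) ∧
        ∀ k ∈ Finset.Icc 1 K,
          ∑ i ∈ (Finset.Icc 1 m).filter (fun i => g i = k), a i ≤ B) ↔
    (∃ f : ℕ × ℕ → ℕ × ℕ,
      Set.BijOn f
        ({((0 : ℕ), (0 : ℕ))} ∪
          {p : ℕ × ℕ | 1 ≤ p.1 ∧ p.1 ≤ m ∧ p.2 ≤ a p.1 - 1} ∪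
          {p : ℕ × ℕ | p.1 = m + 1 ∧ 1 ≤ p.2 ∧
            p.2 ≤ B * K - ∑ i ∈ Finset.Icc 1 m, a i})
        (insert ((0, 0) : ℕ × ℕ) ((Set.Icc 1 K) ×ˢ (Set.Icc 1 B))) ∧
      ∑ i ∈ Finset.Icc 1 m, ∑ j ∈ Finset.Icc 1 (a i - 1),
        (if (f (i, 0)).1 = (f (i, j)).1 then 0
         else if (f (i, 0)).1 = 0 ∨ (f (i, j)).1 = 0 then 1 else 2) = 0) := by
  have hpacking := exists_packing_iff_exists_isGroupPlacement (bins := Icc 1 K)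
    (slots := Icc 1 B) ha
  rw [Nat.card_Icc, Nat.add_sub_cancel] at hpacking
  rw [hpacking, ← coe_virtualVertices, ← coe_physicalVertices]
  simp only [twoStarCost_eq_zero_iff]
  constructor
  · rintro ⟨h, hh⟩
    exact exists_bijOn_of_isGroupPlacement ha hsum hh
  · rintro ⟨f, hf, hcost⟩
    exact exists_isGroupPlacement_of_bijOn hf hcost

/-- Correctness of the reduction of bin packing to wVNE of a 2-star
virtual network on a 2-star physical network.

Physical network: root `R = (0,0)` and bin vertices `(k, b)` for `k ∈ 1..K`,
`b ∈ 1..B`; edges from the root cost `1`, edges inside a bin cost `0`, so the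
shortest-path distance is `0` inside a bin, `1` from `R` to a bin vertex and `2`
across bins (the `if`-expression below).

Virtual network: root `r = (0,0)`; for each `i ∈ 1..m` a group with center `(i, 0)`
and leaves `(i, j)`, `j ∈ 1..aᵢ − 1`, all group-internal edges of demand `1`, the edge
`r`–center of demand `0`; and `B·K − ∑ aᵢ` extra demand-0 leaves `(m+1, ℓ)`.
Since demand-0 edges contribute nothing, the embedding cost is the displayed sum.

Bin packing is solvable iff there is an embedding of cost `0`. -/
theorem binPacking_iff_twoStar_on_twoStar_wVNE (m B K : ℕ) (hm : 1 ≤ m) (hB : 1 ≤ B)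
    (hK : 1 ≤ K) (a : ℕ → ℕ) (ha : ∀ i ∈ Finset.Icc 1 m, 1 ≤ a i)
    (hsum : ∑ i ∈ Finset.Icc 1 m, a i ≤ B * K) :
    (∃ g : ℕ → ℕ, (∀ i ∈ Finset.Icc 1 m, g i ∈ Finset.Icc 1 K) ∧
        ∀ k ∈ Finset.Icc 1 K,
          ∑ i ∈ (Finset.Icc 1 m).filter (fun i => g i = k), a i ≤ B) ↔
    (∃ f : ℕ × ℕ → ℕ × ℕ,
      Set.BijOn f
        ({((0 : ℕ), (0 : ℕ))} ∪
          {p : ℕ × ℕ | 1 ≤ p.1 ∧ p.1 ≤ m ∧ p.2 ≤ a p.1 - 1} ∪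
          {p : ℕ × ℕ | p.1 = m + 1 ∧ 1 ≤ p.2 ∧
            p.2 ≤ B * K - ∑ i ∈ Finset.Icc 1 m, a i})
        (insert ((0, 0) : ℕ × ℕ) ((Set.Icc 1 K) ×ˢ (Set.Icc 1 B))) ∧
      ∑ i ∈ Finset.Icc 1 m, ∑ j ∈ Finset.Icc 1 (a i - 1),
        (if (f (i, 0)).1 = (f (i, j)).1 then 0
         else if (f (i, 0)).1 = 0 ∨ (f (i, j)).1 = 0 then 1 else 2) = 0) :=
  binPacking_iff_twoStar_on_twoStar_wVNE_general m B K a ha hsum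
end

section
/- Let S be a virtual network (a finite connected graph) with m edges and edge demands w : E(S) → {0,1}, and let G be a connected physical network on the same number of vertices with edge costs t : E(G) → {0,1}. Define edge capacities on G by c(e) = m if t(e) = 0 and c(e) = 0 if t(e) = 1. Then the following are equivalent: (i) there exists a bijection f from V(S) to V(G) such that for every edge uv of S with w(uv) = 1 the weighted shortest-path distance dist_t(f(u), f(v)) equals 0 (i.e., a cost-0 embedding exists); (ii) there exists a bijection f from V(S) to V(G) together with, for each edge uv of S, a path in G from f(u) to f(v), such that for every edge e of G the sum of w(uv) over all virtual edges uv whose assigned path traverses e is at most c(e). (This is the reduction lemma transferring NP-completeness of a wVNE variant with desired cost 0 to the corresponding cVNE variant.) -/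
/-
With `{0,1}` demands and capacities in `{0, m}`, the load bound on an edge of cost `1` says
that no demand-1 virtual edge is routed through it, and the bound on an edge of cost `0` holds
automatically, since its load is at most the number `m` of virtual edges. So a feasible
capacitated embedding is exactly an embedding routing every demand-1 edge along a path of
cost-0 edges, i.e. a cost-0 embedding; in a connected `G` the remaining virtual edges can be
routed along arbitrary paths.
-/

open Classical Finset

/-- The weighted shortest-path distance (with natural-number edge costs `t`):
the infimum over all walks from `u` to `v` of the total cost of their edges. -/
noncomputable def weightedDistNat {V : Type} (G : SimpleGraph V) (t : Sym2 V → ℕ)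
    (u v : V) : ℕ :=
  sInf {x : ℕ | ∃ p : G.Walk u v, x = (p.edges.map t).sum}

theorem Finset.sum_ite_le_ite_card_iff {ι : Type*} (s : Finset ι) (w : ι → ℕ)
    (hw : ∀ i ∈ s, w i ≤ 1) (p : ι → Prop) [DecidablePred p] (b : Prop) [Decidable b] :
    (∑ i ∈ s, if p i then w i else 0) ≤ (if b then #s else 0) ↔
      (¬b → ∀ i ∈ s, p i → w i = 0) := by
  by_cases hb : b
  · simp only [hb, if_true, not_true_eq_false, false_imp_iff, iff_true]
    calc (∑ i ∈ s, if p i then w i else 0) ≤ ∑ _i ∈ s, 1 :=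
          Finset.sum_le_sum fun i hi => by split_ifs <;> simp [hw i hi]
      _ = #s := by simp
  · simp only [hb, if_false, not_false_eq_true, true_imp_iff, nonpos_iff_eq_zero,
      Finset.sum_eq_zero_iff, ite_eq_right_iff]

section weightedDistNat

variable {W : Type} {G : SimpleGraph W} {t : Sym2 W → ℕ}

theorem weightedDistNat_comm (x y : W) : weightedDistNat G t x y = weightedDistNat G t y x := by
  unfold weightedDistNat
  congr 1
  ext n
  exact ⟨fun ⟨p, hp⟩ => ⟨p.reverse, by simpa using hp⟩,
    fun ⟨p, hp⟩ => ⟨p.reverse, by simpa using hp⟩⟩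

theorem weightedDistNat_eq_zero_iff {x y : W} (h : G.Reachable x y) :
    weightedDistNat G t x y = 0 ↔ ∃ p : G.Walk x y, ∀ ε ∈ p.edges, t ε = 0 := by
  simp only [weightedDistNat, Nat.sInf_eq_zero, Set.mem_ofPred_eq, eq_comm (a := 0),
    List.sum_eq_zero_iff, List.mem_map, forall_exists_index, and_imp, forall_apply_eq_imp_iff₂]
  exact or_iff_left (Set.nonempty_iff_ne_empty.1 ⟨_, h.some, rfl⟩)

end weightedDistNat

section load

variable {V W : Type} [Fintype V] [DecidableEq W] {S : SimpleGraph V} [DecidableRel S.Adj]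
  {G : SimpleGraph W} {w : Sym2 V → ℕ} {t : Sym2 W → ℕ}

theorem load_le_capacity_iff (hw : ∀ e, w e = 0 ∨ w e = 1)
    (P : Sym2 V → (x : W) × (y : W) × G.Walk x y) :
    (∀ ε ∈ G.edgeSet,
        (∑ e ∈ S.edgeFinset, if ε ∈ (P e).2.2.edges then w e else 0) ≤
          (if t ε = 0 then S.edgeFinset.card else 0)) ↔
      ∀ e ∈ S.edgeSet, w e = 1 → ∀ ε ∈ (P e).2.2.edges, t ε = 0 := by
  have hw1 : ∀ e ∈ S.edgeFinset, w e ≤ 1 := fun e _ => by rcases hw e with h | h <;> omega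
  simp only [Finset.sum_ite_le_ite_card_iff _ _ hw1, SimpleGraph.mem_edgeFinset]
  constructor
  · intro hload e he he1 ε hε
    by_contra hε0
    have := hload ε ((P e).2.2.edges_subset_edgeSet hε) hε0 e he hε
    omega
  · intro hcheap ε _ hε0 e he hε
    exact (hw e).resolve_right fun he1 => hε0 (hcheap e he he1 ε hε)

end load

theorem wVNE_cost_zero_iff_cVNE_feasible_general {V W : Type} [Fintype V]
    [DecidableEq W]
    (S : SimpleGraph V) (G : SimpleGraph W) [DecidableRel S.Adj]
    (hG : G.Connected)
    (w : Sym2 V → ℕ) (hw : ∀ e, w e = 0 ∨ w e = 1)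
    (t : Sym2 W → ℕ) :
    (∃ f : V ≃ W, ∀ u v : V, S.Adj u v → w s(u, v) = 1 →
        weightedDistNat G t (f u) (f v) = 0) ↔
    (∃ (f : V ≃ W) (P : Sym2 V → (x : W) × (y : W) × G.Walk x y),
      (∀ e ∈ S.edgeSet, ∃ u v : V, e = s(u, v) ∧
          (P e).1 = f u ∧ (P e).2.1 = f v ∧ (P e).2.2.IsPath) ∧
      ∀ ε ∈ G.edgeSet,
        (∑ e ∈ S.edgeFinset, if ε ∈ (P e).2.2.edges then w e else 0) ≤
          (if t ε = 0 then S.edgeFinset.card else 0)) := by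
  simp only [load_le_capacity_iff hw]
  constructor
  · rintro ⟨f, hf⟩
    have hroute (x y : W) : ∃ p : G.Walk x y, p.IsPath ∧
        (weightedDistNat G t x y = 0 → ∀ ε ∈ p.edges, t ε = 0) := by
      by_cases hdist : weightedDistNat G t x y = 0
      · obtain ⟨p, hp⟩ := (weightedDistNat_eq_zero_iff (hG x y)).1 hdist
        exact ⟨p.toPath, p.toPath.2, fun _ ε hε => hp ε (p.edges_toPath_subset_edges hε)⟩
      · exact ⟨(hG x y).some.toPath, (hG x y).some.toPath.2, (absurd · hdist)⟩
    choose p hpath hcheap using hroute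
    refine ⟨f, fun e => ⟨f e.out.1, f e.out.2, p _ _⟩,
      fun e _ => ⟨e.out.1, e.out.2, e.out_eq.symm, rfl, rfl, hpath _ _⟩, fun e he he1 => ?_⟩
    rw [← e.out_eq] at he he1
    exact hcheap _ _ (hf _ _ he he1)
  · rintro ⟨f, P, hroute, hcheap⟩
    refine ⟨f, fun u v huv huv1 => ?_⟩
    obtain ⟨u', v', heq, hx, hy, -⟩ := hroute s(u, v) huv
    have hdist : weightedDistNat G t (f u') (f v') = 0 :=
      (weightedDistNat_eq_zero_iff (hG _ _)).2
        ⟨(P s(u, v)).2.2.copy hx hy, by simpa using hcheap s(u, v) huv huv1⟩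
    rcases Sym2.eq_iff.1 heq with ⟨rfl, rfl⟩ | ⟨rfl, rfl⟩
    · exact hdist
    · rwa [weightedDistNat_comm]

/-- The reduction lemma transferring NP-completeness of a wVNE variant
with desired cost `0` to the corresponding cVNE variant.  `S` is a connected virtual
network with `{0,1}` edge demands `w` and `m` edges, `G` a connected physical network
on the same number of vertices with `{0,1}` edge costs `t`; capacities on `G` are
`c e = m` if `t e = 0` and `c e = 0` if `t e = 1`.  Then a cost-0 embedding exists
(i): a bijection sending every demand-1 virtual edge to endpoints at weighted
distance `0`), iff a capacity-feasible embedding exists (ii): a bijection together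
with a path in `G` for each virtual edge such that the load of every physical edge is
at most its capacity). -/
theorem wVNE_cost_zero_iff_cVNE_feasible {V W : Type} [Fintype V] [Fintype W]
    [DecidableEq V] [DecidableEq W]
    (S : SimpleGraph V) (G : SimpleGraph W) [DecidableRel S.Adj]
    (hcard : Fintype.card V = Fintype.card W)
    (hS : S.Connected) (hG : G.Connected)
    (w : Sym2 V → ℕ) (hw : ∀ e, w e = 0 ∨ w e = 1)
    (t : Sym2 W → ℕ) (ht : ∀ e, t e = 0 ∨ t e = 1) :
    (∃ f : V ≃ W, ∀ u v : V, S.Adj u v → w s(u, v) = 1 →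
        weightedDistNat G t (f u) (f v) = 0) ↔
    (∃ (f : V ≃ W) (P : Sym2 V → (x : W) × (y : W) × G.Walk x y),
      (∀ e ∈ S.edgeSet, ∃ u v : V, e = s(u, v) ∧
          (P e).1 = f u ∧ (P e).2.1 = f v ∧ (P e).2.2.IsPath) ∧
      ∀ ε ∈ G.edgeSet,
        (∑ e ∈ S.edgeFinset, if ε ∈ (P e).2.2.edges then w e else 0) ≤
          (if t ε = 0 then S.edgeFinset.card else 0)) :=
  wVNE_cost_zero_iff_cVNE_feasible_general S G hG w hw t
end

section
/- Let m ≥ 4 and T be positive integers and a_1,…,a_{3m} positive integers with ∑ a_i = m·T. Let the physical network be the tree with root R, intermediate vertices u_1,…,u_m adjacent to R, and two leaf children attached to each u_k (so 1 + 3m vertices in total), where every edge has capacity T. Let the virtual network be a star with a center c and 3m leaves, the edge to leaf i having demand a_i. Then the index set {1,…,3m} can be partitioned into m disjoint subsets of size three, each with ∑ a_i exactly T, if and only if there exists a bijection f from the virtual vertices to the physical vertices such that for every tree edge e, ∑ of a_i over all leaves i such that e lies on the unique tree path from f(c) to f(leaf_i) is at most T. (This is the correctness of the reduction of the 3-partition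 problem showing that cVNE of a star virtual network on a 2-star physical network is NP-complete.) -/
open Finset

/-!
A triple partition gives a feasible embedding: put the centre at the root and the three leaves of
the `k`-th triple at `u_k` and its two children (ordered by index). The edge `R–u_k` then carries
exactly the `k`-th triple, and a leaf edge carries part of it.

Conversely, the centre of a feasible embedding must sit at the root. At a leaf of the tree, that
leaf's edge would carry all `mT` of the demand. At some `u_k`, the edge `R–u_k` would carry every
demand except those of the at most two virtual leaves placed below `u_k`; each of these crosses a
leaf edge, hence is at most `T`, so `R–u_k` would carry at least `(m - 2)T > T`. With the centre
at the root, `R–u_k` carries exactly the virtual leaves placed in the `k`-th branch. These `m`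
loads are at most `T` each and sum to `mT`, so each is exactly `T`; likewise the branch sizes are
at most `3` each and sum to `3m`, so each is exactly `3`.
-/

theorem Finset.eq_of_forall_le_of_sum_eq_card_nsmul {ι M : Type*} [AddCommMonoid M]
    [PartialOrder M] [IsOrderedCancelAddMonoid M] {s : Finset ι} {f : ι → M} {c : M}
    (hle : ∀ i ∈ s, f i ≤ c) (hsum : ∑ i ∈ s, f i = #s • c) : ∀ i ∈ s, f i = c :=
  (sum_eq_sum_iff_of_le hle).1 (by rw [hsum, sum_const])

section FiberRank

variable {ι κ : Type*} [LinearOrder ι] [DecidableEq κ] (s : Finset ι) (g : ι → κ)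

def fiberRank (i : ι) : ℕ := #{j ∈ s | g j = g i ∧ j < i}

variable {s g}

theorem fiberRank_lt {i : ι} (hi : i ∈ s) : fiberRank s g i < #{j ∈ s | g j = g i} := by
  refine card_lt_card ((ssubset_iff_of_subset fun j => ?_).2 ⟨i, ?_, ?_⟩)
  · simp +contextual
  · simp [hi]
  · simp

theorem fiberRank_lt_fiberRank {i j : ι} (hi : i ∈ s) (hij : i < j) (hg : g i = g j) :
    fiberRank s g i < fiberRank s g j := by
  refine card_lt_card ((ssubset_iff_of_subset fun x => ?_).2 ⟨i, ?_, ?_⟩)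
  · simp only [mem_filter]
    exact fun ⟨hx, hxg, hxi⟩ => ⟨hx, hxg.trans hg, hxi.trans hij⟩
  · simp [hi, hg, hij]
  · simp

theorem injOn_fiberRank : Set.InjOn (fun i => (g i, fiberRank s g i)) s := by
  intro i hi j hj hij
  simp only [Prod.mk.injEq] at hij
  obtain ⟨hg, hr⟩ := hij
  rcases lt_trichotomy i j with h | h | h
  · exact absurd hr (fiberRank_lt_fiberRank hi h hg).ne
  · exact h
  · exact absurd hr (fiberRank_lt_fiberRank hj h hg.symm).ne'

end FiberRank

section StarCutLoad

variable {β : Type*} (s : Finset ℕ) (a : ℕ → ℕ) (f : ℕ → β)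

def starCutLoad (S : β → Prop) [DecidablePred S] : ℕ :=
  ∑ i ∈ s, if (S (f 0) ∧ ¬ S (f i)) ∨ (¬ S (f 0) ∧ S (f i)) then a i else 0

variable {s a f}

theorem starCutLoad_of_pos {S : β → Prop} [DecidablePred S] (h : S (f 0)) :
    starCutLoad s a f S = ∑ i ∈ s with ¬ S (f i), a i := by
  simp [starCutLoad, h, sum_filter]

theorem starCutLoad_of_neg {S : β → Prop} [DecidablePred S] (h : ¬ S (f 0)) :
    starCutLoad s a f S = ∑ i ∈ s with S (f i), a i := by
  simp [starCutLoad, h, sum_filter]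

theorem ne_center_of_injOn {n : ℕ} (hinj : Set.InjOn f (Set.Icc 0 n)) {i : ℕ}
    (hi : i ∈ Icc 1 n) : f i ≠ f 0 := fun h => by
  simp only [mem_Icc] at hi
  have := hinj (by simp; omega) (by simp) h
  omega

theorem starCutLoad_eq_center_eq_sum [DecidableEq β] (h : ∀ i ∈ s, f i ≠ f 0) :
    starCutLoad s a f (· = f 0) = ∑ i ∈ s, a i := by
  rw [starCutLoad_of_pos (S := (· = f 0)) rfl, filter_true_of_mem h]

theorem single_le_starCutLoad [DecidableEq β] {i : ℕ} (hi : i ∈ s) (h : f i ≠ f 0) :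
    a i ≤ starCutLoad s a f (· = f i) := by
  rw [starCutLoad_of_neg h.symm]
  exact single_le_sum (fun _ _ => Nat.zero_le _) (mem_filter.2 ⟨hi, rfl⟩)

end StarCutLoad

def twoStarVertices (m : ℕ) : Set (ℕ × ℕ) := insert (0, 0) (Set.Icc 1 m ×ˢ Set.Icc 0 2)

theorem twoStarVertices_eq_coe (m : ℕ) :
    twoStarVertices m = ↑(insert (0, 0) (Icc 1 m ×ˢ Icc 0 2) : Finset (ℕ × ℕ)) := by
  simp [twoStarVertices]

section Embedding

variable {n m k : ℕ} {a g : ℕ → ℕ}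

def partitionEmbedding (n : ℕ) (g : ℕ → ℕ) (i : ℕ) : ℕ × ℕ :=
  if i = 0 then (0, 0) else (g i, fiberRank (Icc 1 n) g i)

theorem partitionEmbedding_of_mem {i : ℕ} (hi : i ∈ Icc 1 n) :
    partitionEmbedding n g i = (g i, fiberRank (Icc 1 n) g i) :=
  if_neg (by simp at hi; omega)

theorem partitionEmbedding_fst_ne_zero (hg : ∀ i ∈ Icc 1 n, g i ≠ 0) {i : ℕ}
    (hi : i ∈ Icc 1 n) : (partitionEmbedding n g i).1 ≠ 0 := by
  rw [partitionEmbedding_of_mem hi]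
  exact hg i hi

theorem injOn_partitionEmbedding (hg : ∀ i ∈ Icc 1 n, g i ≠ 0) :
    Set.InjOn (partitionEmbedding n g) (Set.Icc 0 n) := by
  intro i hi j hj hij
  have hleaf : ∀ {l}, l ∈ Set.Icc 0 n → l ≠ 0 → l ∈ Icc 1 n := fun hl hl0 => by
    simp at hl ⊢; omega
  rcases eq_or_ne i 0 with rfl | hi0 <;> rcases eq_or_ne j 0 with rfl | hj0
  · rfl
  · exact absurd (congrArg Prod.fst hij).symm (partitionEmbedding_fst_ne_zero hg (hleaf hj hj0))
  · exact absurd (congrArg Prod.fst hij) (partitionEmbedding_fst_ne_zero hg (hleaf hi hi0))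
  · rw [partitionEmbedding_of_mem (hleaf hi hi0), partitionEmbedding_of_mem (hleaf hj hj0)] at hij
    exact injOn_fiberRank (hleaf hi hi0) (hleaf hj hj0) hij

theorem mapsTo_partitionEmbedding (hg : ∀ i ∈ Icc 1 (3 * m), g i ∈ Icc 1 m)
    (hcard : ∀ k ∈ Icc 1 m, #{i ∈ Icc 1 (3 * m) | g i = k} = 3) :
    Set.MapsTo (partitionEmbedding (3 * m) g) (Set.Icc 0 (3 * m)) (twoStarVertices m) := by
  intro i hi
  rcases eq_or_ne i 0 with rfl | hi0
  · exact Set.mem_insert _ _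
  · have hi' : i ∈ Icc 1 (3 * m) := by simp at hi ⊢; omega
    have hrank := hcard _ (hg i hi') ▸ fiberRank_lt hi'
    have hgi := mem_Icc.1 (hg i hi')
    rw [partitionEmbedding_of_mem hi']
    exact Set.mem_insert_of_mem _ ⟨hgi, Nat.zero_le _, by omega⟩

theorem bijOn_partitionEmbedding (hg : ∀ i ∈ Icc 1 (3 * m), g i ∈ Icc 1 m)
    (hcard : ∀ k ∈ Icc 1 m, #{i ∈ Icc 1 (3 * m) | g i = k} = 3) :
    Set.BijOn (partitionEmbedding (3 * m) g) (Set.Icc 0 (3 * m)) (twoStarVertices m) := by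
  have hmaps := mapsTo_partitionEmbedding hg hcard
  have hinj := injOn_partitionEmbedding fun i hi =>
    Nat.one_le_iff_ne_zero.1 (mem_Icc.1 (hg i hi)).1
  rw [twoStarVertices_eq_coe, ← coe_Icc] at hmaps ⊢
  rw [← coe_Icc] at hinj
  exact ⟨hmaps, hinj, surjOn_of_injOn_of_card_le _ hmaps hinj (by simp; omega)⟩

theorem starCutLoad_partitionEmbedding_fst (hk : k ≠ 0) :
    starCutLoad (Icc 1 n) a (partitionEmbedding n g) (·.1 = k) =
      ∑ i ∈ Icc 1 n with g i = k, a i := by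
  rw [starCutLoad_of_neg (by simp [partitionEmbedding]; omega)]
  exact sum_congr (filter_congr fun i hi => by rw [partitionEmbedding_of_mem hi]) fun _ _ => rfl

theorem starCutLoad_partitionEmbedding_le (hk : k ≠ 0) (j : ℕ) :
    starCutLoad (Icc 1 n) a (partitionEmbedding n g) (· = (k, j)) ≤
      ∑ i ∈ Icc 1 n with g i = k, a i := by
  rw [starCutLoad_of_neg (by simp [partitionEmbedding]; omega)]
  refine sum_le_sum_of_subset fun i => ?_
  simp only [mem_filter]
  exact fun ⟨hi, hfi⟩ => ⟨hi, by rw [partitionEmbedding_of_mem hi] at hfi; simp_all⟩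

end Embedding

section CenterPlacement

variable {n m k T : ℕ} {a : ℕ → ℕ} {f : ℕ → ℕ × ℕ}

theorem sum_le_three_mul_of_center_eq_mid
    (hmaps : Set.MapsTo f (Set.Icc 0 n) (twoStarVertices m))
    (hinj : Set.InjOn f (Set.Icc 0 n)) (hcenter : f 0 = (k, 0))
    (hmid : starCutLoad (Icc 1 n) a f (·.1 = k) ≤ T)
    (hleaf : ∀ j ∈ ({1, 2} : Finset ℕ), starCutLoad (Icc 1 n) a f (· = (k, j)) ≤ T) :
    ∑ i ∈ Icc 1 n, a i ≤ 3 * T := by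
  set branch := {i ∈ Icc 1 n | (f i).1 = k}
  have hbranch : Set.MapsTo f branch ({(k, 1), (k, 2)} : Finset (ℕ × ℕ)) := by
    intro i hi
    simp only [branch, coe_filter, Set.mem_ofPred_eq] at hi
    have hne := ne_center_of_injOn hinj hi.1
    have hmem := hmaps (show i ∈ Set.Icc 0 n by simp at hi ⊢; omega)
    simp only [twoStarVertices, Set.mem_insert_iff, Set.mem_prod, Set.mem_Icc] at hmem
    simp only [coe_insert, coe_singleton, Set.mem_insert_iff, Set.mem_singleton_iff]
    rw [hcenter] at hne
    simp only [ne_eq, Prod.ext_iff] at hmem hne ⊢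
    omega
  have hcard : #branch ≤ 2 :=
    (card_le_card_of_injOn f hbranch (hinj.mono fun i hi => by
      simp [branch] at hi ⊢; omega)).trans card_le_two
  have hdemand : ∀ i ∈ branch, a i ≤ T := fun i hi => by
    have hj := hbranch hi
    simp only [coe_insert, coe_singleton, Set.mem_insert_iff, Set.mem_singleton_iff] at hj
    have hi' := (mem_filter.1 hi).1
    refine (single_le_starCutLoad hi' (ne_center_of_injOn hinj hi')).trans ?_
    rcases hj with hj | hj <;> rw [hj] <;> exact hleaf _ (by simp)
  calc ∑ i ∈ Icc 1 n, a i
      = ∑ i ∈ branch, a i + ∑ i ∈ Icc 1 n with ¬ (f i).1 = k, a i :=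
        (sum_filter_add_sum_filter_not _ _ _).symm
    _ ≤ #branch • T + T := by
        refine add_le_add (sum_le_card_nsmul _ _ _ hdemand) ?_
        rwa [starCutLoad_of_pos (by simp [hcenter])] at hmid
    _ ≤ 3 * T := by rw [smul_eq_mul]; nlinarith

theorem center_eq_root (hm : 4 ≤ m) (hT : 1 ≤ T) (hsum : ∑ i ∈ Icc 1 (3 * m), a i = m * T)
    (hmaps : Set.MapsTo f (Set.Icc 0 (3 * m)) (twoStarVertices m))
    (hinj : Set.InjOn f (Set.Icc 0 (3 * m)))
    (hmid : ∀ k ∈ Icc 1 m, starCutLoad (Icc 1 (3 * m)) a f (·.1 = k) ≤ T)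
    (hleaf : ∀ k ∈ Icc 1 m, ∀ j ∈ ({1, 2} : Finset ℕ),
      starCutLoad (Icc 1 (3 * m)) a f (· = (k, j)) ≤ T) :
    f 0 = (0, 0) := by
  have hmem := hmaps (Set.left_mem_Icc.2 (Nat.zero_le (3 * m)))
  simp only [twoStarVertices, Set.mem_insert_iff, Set.mem_prod, Set.mem_Icc] at hmem
  obtain hroot | ⟨hk, hj⟩ := hmem
  · exact hroot
  replace hk : (f 0).1 ∈ Icc 1 m := mem_Icc.2 hk
  obtain hat_mid | hat_leaf : (f 0).2 = 0 ∨ (f 0).2 ∈ ({1, 2} : Finset ℕ) := by simp; omega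
  · have := sum_le_three_mul_of_center_eq_mid hmaps hinj (Prod.ext rfl hat_mid) (hmid _ hk)
      (hleaf _ hk)
    nlinarith
  · have := hleaf _ hk _ hat_leaf
    rw [Prod.mk.eta, starCutLoad_eq_center_eq_sum (f := f) fun i hi => ne_center_of_injOn hinj hi,
      hsum] at this
    nlinarith

theorem exists_partition_of_center_eq_root (hsum : ∑ i ∈ Icc 1 (3 * m), a i = m * T)
    (hmaps : Set.MapsTo f (Set.Icc 0 (3 * m)) (twoStarVertices m))
    (hinj : Set.InjOn f (Set.Icc 0 (3 * m))) (hroot : f 0 = (0, 0))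
    (hmid : ∀ k ∈ Icc 1 m, starCutLoad (Icc 1 (3 * m)) a f (·.1 = k) ≤ T) :
    ∃ g : ℕ → ℕ, (∀ i ∈ Icc 1 (3 * m), g i ∈ Icc 1 m) ∧
      ∀ k ∈ Icc 1 m, #{i ∈ Icc 1 (3 * m) | g i = k} = 3 ∧
        ∑ i ∈ Icc 1 (3 * m) with g i = k, a i = T := by
  have hbranches : ∀ i ∈ Icc 1 (3 * m), f i ∈ Icc 1 m ×ˢ Icc 0 2 := fun i hi => by
    have hmem := hmaps (show i ∈ Set.Icc 0 (3 * m) by simp at hi ⊢; omega)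
    have hne := hroot ▸ ne_center_of_injOn hinj hi
    simp only [twoStarVertices, Set.mem_insert_iff, hne, false_or, Set.mem_prod,
      Set.mem_Icc] at hmem
    simpa [mem_product] using hmem
  have hg : ∀ i ∈ Icc 1 (3 * m), (f i).1 ∈ Icc 1 m := fun i hi => (mem_product.1 (hbranches i hi)).1
  have hcard : ∀ k ∈ Icc 1 m, #{i ∈ Icc 1 (3 * m) | (f i).1 = k} ≤ 3 := fun k _ => by
    refine (card_le_card_of_injOn f (t := {k} ×ˢ Icc 0 2) (fun i hi => ?_)
      (hinj.mono fun i hi => ?_)).trans (by simp)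
    · simp only [coe_filter, Set.mem_ofPred_eq] at hi
      exact mem_coe.2 (mem_product.2 ⟨mem_singleton.2 hi.2, (mem_product.1 (hbranches i hi.1)).2⟩)
    · simp at hi ⊢; omega
  have hload : ∀ k ∈ Icc 1 m, ∑ i ∈ Icc 1 (3 * m) with (f i).1 = k, a i ≤ T := fun k hk => by
    have := hmid k hk
    rwa [starCutLoad_of_neg (by simp at hk; simp [hroot]; omega)] at this
  have hcard_sum : ∑ k ∈ Icc 1 m, #{i ∈ Icc 1 (3 * m) | (f i).1 = k} = #(Icc 1 m) • 3 := by
    rw [← card_eq_sum_card_fiberwise fun i hi => hg i hi]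
    simp [mul_comm]
  have hload_sum : ∑ k ∈ Icc 1 m, ∑ i ∈ Icc 1 (3 * m) with (f i).1 = k, a i = #(Icc 1 m) • T := by
    rw [sum_fiberwise_of_maps_to hg, hsum]
    simp
  exact ⟨fun i => (f i).1, hg, fun k hk =>
    ⟨eq_of_forall_le_of_sum_eq_card_nsmul hcard hcard_sum k hk,
      eq_of_forall_le_of_sum_eq_card_nsmul hload hload_sum k hk⟩⟩

end CenterPlacement

/-- Vertex encoding: the root `R` is `(0, 0)`, `u_k` is `(k, 0)` and its two leaves are `(k, 1)`,
`(k, 2)`; the centre of the star is `0` and its leaves are `1, …, 3m`. A tree edge is given by the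
set of vertices below it, `{p | p.1 = k}` for `R–u_k` and `{(k, j)}` for `u_k–(k, j)`, and it lies
on the routing path of leaf `i` iff exactly one of `f 0`, `f i` is below it (`starCutLoad`). -/
theorem threePartition_iff_star_on_twoStar_cVNE_general (m T : ℕ) (hm : 4 ≤ m) (hT : 1 ≤ T)
    (a : ℕ → ℕ)
    (hsum : ∑ i ∈ Finset.Icc 1 (3 * m), a i = m * T) :
    (∃ g : ℕ → ℕ, (∀ i ∈ Finset.Icc 1 (3 * m), g i ∈ Finset.Icc 1 m) ∧
        ∀ k ∈ Finset.Icc 1 m,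
          ((Finset.Icc 1 (3 * m)).filter (fun i => g i = k)).card = 3 ∧
          ∑ i ∈ (Finset.Icc 1 (3 * m)).filter (fun i => g i = k), a i = T) ↔
    (∃ f : ℕ → ℕ × ℕ,
      Set.BijOn f (Set.Icc 0 (3 * m))
        (insert ((0, 0) : ℕ × ℕ) ((Set.Icc 1 m) ×ˢ (Set.Icc 0 2))) ∧
      (∀ k ∈ Finset.Icc 1 m,
        (∑ i ∈ Finset.Icc 1 (3 * m),
          if ((f 0).1 = k ∧ (f i).1 ≠ k) ∨ ((f 0).1 ≠ k ∧ (f i).1 = k)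
          then a i else 0) ≤ T) ∧
      (∀ k ∈ Finset.Icc 1 m, ∀ j ∈ ({1, 2} : Finset ℕ),
        (∑ i ∈ Finset.Icc 1 (3 * m),
          if (f 0 = (k, j) ∧ f i ≠ (k, j)) ∨ (f 0 ≠ (k, j) ∧ f i = (k, j))
          then a i else 0) ≤ T)) := by
  constructor
  · rintro ⟨g, hg, hpart⟩
    refine ⟨partitionEmbedding (3 * m) g, bijOn_partitionEmbedding hg fun k hk => (hpart k hk).1,
      fun k hk => ?_, fun k hk j _ => ?_⟩
    · exact (starCutLoad_partitionEmbedding_fst (by simp at hk; omega)).trans_le (hpart k hk).2.le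
    · exact (starCutLoad_partitionEmbedding_le (by simp at hk; omega) j).trans (hpart k hk).2.le
  · rintro ⟨f, hf, hmid, hleaf⟩
    have hroot := center_eq_root hm hT hsum hf.mapsTo hf.injOn hmid hleaf
    exact exists_partition_of_center_eq_root hsum hf.mapsTo hf.injOn hroot hmid

/-- Correctness of the reduction of the 3-partition problem showing
that cVNE of a star virtual network on a 2-star physical network is NP-complete.

Physical network: a tree with root `R = (0,0)`, intermediate vertices `u_k = (k,0)`
for `k ∈ 1..m`, and two leaves `(k,1)`, `(k,2)` attached to each `u_k`; every edge
has capacity `T`.  An edge of the tree lies on the path between two embedded vertices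
iff exactly one of the two lies in the subtree below that edge: the subtree below
`R–u_k` is `{p | p.1 = k}` and the subtree below `u_k–(k,j)` is `{(k,j)}`.

Virtual network: a star with center `c` (index `0`) and `3m` leaves (indices
`1..3m`), the edge to leaf `i` having demand `aᵢ`.

The numbers `a₁,…,a_{3m}` (with `∑ aᵢ = m·T`) admit a partition into `m` triples
each summing to `T` iff there is a capacity-feasible embedding. -/
theorem threePartition_iff_star_on_twoStar_cVNE (m T : ℕ) (hm : 4 ≤ m) (hT : 1 ≤ T)
    (a : ℕ → ℕ) (ha : ∀ i ∈ Finset.Icc 1 (3 * m), 1 ≤ a i)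
    (hsum : ∑ i ∈ Finset.Icc 1 (3 * m), a i = m * T) :
    (∃ g : ℕ → ℕ, (∀ i ∈ Finset.Icc 1 (3 * m), g i ∈ Finset.Icc 1 m) ∧
        ∀ k ∈ Finset.Icc 1 m,
          ((Finset.Icc 1 (3 * m)).filter (fun i => g i = k)).card = 3 ∧
          ∑ i ∈ (Finset.Icc 1 (3 * m)).filter (fun i => g i = k), a i = T) ↔
    (∃ f : ℕ → ℕ × ℕ,
      Set.BijOn f (Set.Icc 0 (3 * m))
        (insert ((0, 0) : ℕ × ℕ) ((Set.Icc 1 m) ×ˢ (Set.Icc 0 2))) ∧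
      (∀ k ∈ Finset.Icc 1 m,
        (∑ i ∈ Finset.Icc 1 (3 * m),
          if ((f 0).1 = k ∧ (f i).1 ≠ k) ∨ ((f 0).1 ≠ k ∧ (f i).1 = k)
          then a i else 0) ≤ T) ∧
      (∀ k ∈ Finset.Icc 1 m, ∀ j ∈ ({1, 2} : Finset ℕ),
        (∑ i ∈ Finset.Icc 1 (3 * m),
          if (f 0 = (k, j) ∧ f i ≠ (k, j)) ∨ (f 0 ≠ (k, j) ∧ f i = (k, j))
          then a i else 0) ≤ T)) :=
  threePartition_iff_star_on_twoStar_cVNE_general m T hm hT a hsum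
end

section
/- Let a_1,…,a_n be positive integers with ∑ a_i = 2·T. Let the physical network be the path on positions 0,1,…,n, where every edge has capacity T. Let the virtual network be a star with a center c and n leaves, the edge to leaf i having demand a_i. Then there exists a subset S ⊆ {1,…,n} with ∑_{i ∈ S} a_i = T if and only if there exists a bijection f from {c, leaf_1, …, leaf_n} to {0,1,…,n} such that for every k ∈ {0,…,n−1}, ∑ of a_i over all leaves i with min(f(leaf_i), f(c)) ≤ k < max(f(leaf_i), f(c)) is at most T. (This is the correctness of the reduction of the partition problem showing that cVNE of a star virtual network on a linear physical network is NP-complete.) -/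
/-!
Placing the center at position `#S`, the leaves of `S` to its left and the other leaves to its
right, every edge of the line is crossed only by leaves of `S` or only by leaves outside `S`,
so its load is at most `T`. Conversely, all leaves left of the center cross the edge just left
of it and all leaves right of it cross the edge just right of it; so both sides weigh at most
`T`, and since they weigh `2T` together, the left side is a half.
-/

open Finset

theorem Set.BijOn.piecewise_union {α β : Type*} {s₁ s₂ : Set α} {t₁ t₂ : Set β} {f g : α → β}
    [∀ j, Decidable (j ∈ s₁)] (hf : BijOn f s₁ t₁) (hg : BijOn g s₂ t₂) (hs : Disjoint s₁ s₂)
    (ht : Disjoint t₁ t₂) : BijOn (s₁.piecewise f g) (s₁ ∪ s₂) (t₁ ∪ t₂) := by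
  have h₁ : BijOn (s₁.piecewise f g) s₁ t₁ := hf.congr (piecewise_eqOn s₁ f g).symm
  have h₂ : BijOn (s₁.piecewise f g) s₂ t₂ :=
    hg.congr fun x hx => (piecewise_eq_of_notMem s₁ f g (hs.notMem_of_mem_right hx)).symm
  refine h₁.union h₂ ((injOn_union hs).2 ⟨h₁.injOn, h₂.injOn, ?_⟩)
  exact fun x hx y hy => ht.ne_of_mem (h₁.mapsTo hx) (h₂.mapsTo hy)

section SegmentLoad

variable (s : Finset ℕ) (a p : ℕ → ℕ) (c : ℕ)

/-- Load of the line edge `{k, k+1}` when leaf `i ∈ s` of a star sits at `p i` and the center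
at `c`. -/
def segmentLoad (k : ℕ) : ℕ :=
  ∑ i ∈ s, if min (p i) c ≤ k ∧ k < max (p i) c then a i else 0

variable {s a p c}

theorem segmentLoad_le_sum_left {k : ℕ} (hk : k < c) :
    segmentLoad s a p c k ≤ ∑ i ∈ s with p i < c, a i := by
  rw [segmentLoad, sum_filter]
  gcongr with i
  split_ifs <;> omega

theorem segmentLoad_le_sum_right {k : ℕ} (hk : c ≤ k) :
    segmentLoad s a p c k ≤ ∑ i ∈ s with c < p i, a i := by
  rw [segmentLoad, sum_filter]
  gcongr with i
  split_ifs <;> omega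

theorem sum_left_le_segmentLoad_pred :
    ∑ i ∈ s with p i < c, a i ≤ segmentLoad s a p c (c - 1) := by
  rw [segmentLoad, sum_filter]
  gcongr with i
  split_ifs <;> omega

theorem sum_right_le_segmentLoad : ∑ i ∈ s with c < p i, a i ≤ segmentLoad s a p c c := by
  rw [segmentLoad, sum_filter]
  gcongr with i
  split_ifs <;> omega

theorem segmentLoad_le_max_of_separated {S : Finset ℕ} (hl : ∀ i ∈ S, p i < c)
    (hr : ∀ i ∈ s \ S, c < p i) (k : ℕ) :
    segmentLoad s a p c k ≤ max (∑ i ∈ S, a i) (∑ i ∈ s \ S, a i) := by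
  rcases lt_or_ge k c with hk | hk
  · calc segmentLoad s a p c k ≤ ∑ i ∈ s with p i < c, a i := segmentLoad_le_sum_left hk
      _ ≤ ∑ i ∈ S, a i := by
        refine sum_le_sum_of_subset fun i hi => ?_
        rw [mem_filter] at hi
        by_contra hiS
        exact absurd (hr i (mem_sdiff.2 ⟨hi.1, hiS⟩)) (by omega)
      _ ≤ _ := le_max_left _ _
  · calc segmentLoad s a p c k ≤ ∑ i ∈ s with c < p i, a i := segmentLoad_le_sum_right hk
      _ ≤ ∑ i ∈ s \ S, a i := by
        refine sum_le_sum_of_subset fun i hi => ?_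
        rw [mem_filter] at hi
        exact mem_sdiff.2 ⟨hi.1, fun hiS => absurd (hl i hiS) (by omega)⟩
      _ ≤ _ := le_max_right _ _

variable {n T : ℕ}

theorem sum_left_le_of_segmentLoad_le (hload : ∀ k < n, segmentLoad s a p c k ≤ T)
    (hc : c ≤ n) : ∑ i ∈ s with p i < c, a i ≤ T := by
  rcases Nat.eq_zero_or_pos c with rfl | hc0
  · simp
  · exact sum_left_le_segmentLoad_pred.trans (hload _ (by omega))

theorem sum_right_le_of_segmentLoad_le (hload : ∀ k < n, segmentLoad s a p c k ≤ T)
    (hp : ∀ i ∈ s, p i ≤ n) : ∑ i ∈ s with c < p i, a i ≤ T := by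
  by_cases hc : c < n
  · exact sum_right_le_segmentLoad.trans (hload c hc)
  · rw [filter_false_of_mem fun i hi => by have := hp i hi; omega, sum_empty]
    exact Nat.zero_le T

end SegmentLoad

theorem exists_bijOn_Icc_separating {n : ℕ} {S : Finset ℕ} (hS : S ⊆ Icc 1 n) :
    ∃ f : ℕ → ℕ, Set.BijOn f (Set.Icc 0 n) (Set.Icc 0 n) ∧ f 0 = #S ∧
      (∀ i ∈ S, f i < #S) ∧ ∀ i ∈ Icc 1 n \ S, #S < f i := by
  set m := #S
  have hm : m ≤ n := by simpa using card_le_card hS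
  obtain ⟨g, hg⟩ := S.finite_toSet.exists_bijOn_of_encard_eq (t := (range m : Set ℕ))
    (by rw [Set.encard_coe_eq_coe_finsetCard, Set.encard_coe_eq_coe_finsetCard, card_range])
  obtain ⟨h, hh⟩ := (Icc 1 n \ S).finite_toSet.exists_bijOn_of_encard_eq (t := (Ioc m n : Set ℕ))
    (by rw [Set.encard_coe_eq_coe_finsetCard, Set.encard_coe_eq_coe_finsetCard,
      card_sdiff_of_subset hS, Nat.card_Icc, Nat.card_Ioc]; norm_cast)
  have hgh := hg.piecewise_union hh (disjoint_coe.2 disjoint_sdiff)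
    (by simp [Set.disjoint_left]; omega)
  have hf := (Set.bijOn_singleton.2 rfl : Set.BijOn (fun _ => m) {0} {m}).piecewise_union hgh
    (by simp; exact fun h0 => by simpa using hS h0) (by simp)
  set f := ({0} : Set ℕ).piecewise (fun _ => m) ((S : Set ℕ).piecewise g h)
  have hf_leaf : ∀ i ∈ Icc 1 n, f i = (S : Set ℕ).piecewise g h i := fun i hi =>
    Set.piecewise_eq_of_notMem _ _ _ (by simp at hi ⊢; omega)
  refine ⟨f, ?_, rfl, fun i hi => ?_, fun i hi => ?_⟩
  · have hdom : ({0} ∪ (↑S ∪ ↑(Icc 1 n \ S)) : Set ℕ) = Set.Icc 0 n := by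
      ext i
      by_cases hi : i ∈ S
      · have := mem_Icc.1 (hS hi)
        simp [hi]
        omega
      · simp [hi]
        omega
    have hcod : ({m} ∪ (↑(range m) ∪ ↑(Ioc m n)) : Set ℕ) = Set.Icc 0 n := by
      ext i
      simp
      omega
    rwa [hdom, hcod] at hf
  · rw [hf_leaf i (hS hi), Set.piecewise_eq_of_mem _ _ _ hi]
    exact mem_range.1 (hg.mapsTo hi)
  · rw [hf_leaf i (sdiff_subset hi), Set.piecewise_eq_of_notMem _ _ _ (by simp at hi ⊢; tauto)]
    exact (mem_Ioc.1 (hh.mapsTo hi)).1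

theorem exists_bijOn_segmentLoad_le_of_sum_eq {n T : ℕ} {a : ℕ → ℕ}
    (hsum : ∑ i ∈ Icc 1 n, a i = 2 * T) {S : Finset ℕ} (hS : S ⊆ Icc 1 n)
    (hST : ∑ i ∈ S, a i = T) :
    ∃ f : ℕ → ℕ, Set.BijOn f (Set.Icc 0 n) (Set.Icc 0 n) ∧
      ∀ k < n, segmentLoad (Icc 1 n) a f (f 0) k ≤ T := by
  obtain ⟨f, hf, hf0, hl, hr⟩ := exists_bijOn_Icc_separating hS
  have hcompl : ∑ i ∈ Icc 1 n \ S, a i = T := by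
    have := sum_sdiff hS (f := a)
    omega
  refine ⟨f, hf, fun k _ => ?_⟩
  rw [← hf0] at hl hr
  simpa [hST, hcompl] using segmentLoad_le_max_of_separated (a := a) hl hr k

theorem exists_sum_eq_of_bijOn_segmentLoad_le {n T : ℕ} {a f : ℕ → ℕ}
    (hsum : ∑ i ∈ Icc 1 n, a i = 2 * T) (hf : Set.BijOn f (Set.Icc 0 n) (Set.Icc 0 n))
    (hload : ∀ k < n, segmentLoad (Icc 1 n) a f (f 0) k ≤ T) :
    ∃ S ⊆ Icc 1 n, ∑ i ∈ S, a i = T := by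
  have hmem : ∀ i ∈ Icc 1 n, i ∈ Set.Icc 0 n := fun i hi => by simp at hi ⊢; omega
  have hf0 : f 0 ≤ n := (hf.mapsTo (Set.left_mem_Icc.2 (Nat.zero_le n))).2
  have hleaf : ∀ i ∈ Icc 1 n, f i ≤ n ∧ f i ≠ f 0 := fun i hi =>
    ⟨(hf.mapsTo (hmem i hi)).2, fun h => by
      have := hf.injOn (hmem i hi) (Set.left_mem_Icc.2 (Nat.zero_le n)) h
      simp [this] at hi⟩
  refine ⟨{i ∈ Icc 1 n | f i < f 0}, filter_subset _ _, ?_⟩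
  have hleft := sum_left_le_of_segmentLoad_le hload hf0
  have hright : ∑ i ∈ Icc 1 n with ¬f i < f 0, a i ≤ T := by
    have hsplit : {i ∈ Icc 1 n | ¬f i < f 0} = {i ∈ Icc 1 n | f 0 < f i} :=
      filter_congr fun i hi => by have := hleaf i hi; omega
    rw [hsplit]
    exact sum_right_le_of_segmentLoad_le hload fun i hi => (hleaf i hi).1
  have := sum_filter_add_sum_filter_not (Icc 1 n) (fun i => f i < f 0) a
  omega

theorem partition_iff_star_on_line_cVNE_general (n T : ℕ)
    (a : ℕ → ℕ)
    (hsum : ∑ i ∈ Finset.Icc 1 n, a i = 2 * T) :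
    (∃ S ⊆ Finset.Icc 1 n, ∑ i ∈ S, a i = T) ↔
    (∃ f : ℕ → ℕ, Set.BijOn f (Set.Icc 0 n) (Set.Icc 0 n) ∧
      ∀ k < n,
        (∑ i ∈ Finset.Icc 1 n,
          if min (f i) (f 0) ≤ k ∧ k < max (f i) (f 0) then a i else 0) ≤ T) :=
  ⟨fun ⟨_, hS, hST⟩ => exists_bijOn_segmentLoad_le_of_sum_eq hsum hS hST,
    fun ⟨_, hf, hload⟩ => exists_sum_eq_of_bijOn_segmentLoad_le hsum hf hload⟩

/-- Correctness of the reduction of the partition problem showing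
that cVNE of a star virtual network on a linear physical network is NP-complete.

Physical network: the path on positions `0,…,n`, each edge `{k, k+1}` of capacity
`T`.  Virtual network: a star with center `c` (index `0`) and `n` leaves (indices
`1..n`), the edge to leaf `i` having demand `aᵢ`; the virtual edge to leaf `i` is
routed along the segment between `f i` and `f 0`, so it loads edge `{k, k+1}` iff
`min (f i) (f 0) ≤ k < max (f i) (f 0)`.

The numbers `a₁,…,a_n` (with `∑ aᵢ = 2T`) admit a subset summing to `T` iff there is
a capacity-feasible embedding. -/
theorem partition_iff_star_on_line_cVNE (n T : ℕ) (hn : 1 ≤ n)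
    (a : ℕ → ℕ) (ha : ∀ i ∈ Finset.Icc 1 n, 1 ≤ a i)
    (hsum : ∑ i ∈ Finset.Icc 1 n, a i = 2 * T) :
    (∃ S ⊆ Finset.Icc 1 n, ∑ i ∈ S, a i = T) ↔
    (∃ f : ℕ → ℕ, Set.BijOn f (Set.Icc 0 n) (Set.Icc 0 n) ∧
      ∀ k < n,
        (∑ i ∈ Finset.Icc 1 n,
          if min (f i) (f 0) ≤ k ∧ k < max (f i) (f 0) then a i else 0) ≤ T) :=
  partition_iff_star_on_line_cVNE_general n T a hsum
end

section
/- Let T be a finite tree (a connected acyclic simple graph). For every walk p in T from a vertex s to a vertex t there exists a walk q in T from s to t such that q visits every vertex that p visits, q traverses each edge of T at most once in each direction (the list of darts of q has no duplicates), and for every nonnegative edge-weight function w on T the total w-weight of q (summing w over traversals) is at most the total w-weight of p. In particular, if an optimal embedding of a uniform line on T exists, then there exists an optimal embedding whose induced walk traverses every edge of T at most once in each direction. -/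
/-!
If a walk `p` traverses some dart `(u, v)` twice, we may assume the first traversal is its
first step, so `p = (u, v) · c · (u, v) · r` with `c` a walk from `v` back to `u`. Then
`c⁻¹ · r` is a strictly shorter walk with the same endpoints that visits every vertex of `p`
and whose edges form a sub-multiset of those of `p`. Iterating until no dart repeats gives
`q`, and nonnegative weights can only decrease along a sub-multiset of edges.
-/

open List

theorem List.Subperm.sum_map_le_sum_map {α M : Type*} [AddCommMonoid M] [PartialOrder M]
    [IsOrderedAddMonoid M] {l₁ l₂ : List α} (h : l₁ <+~ l₂) (f : α → M)
    (h₀ : ∀ a ∈ l₂, 0 ≤ f a) : (l₁.map f).sum ≤ (l₂.map f).sum := by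
  obtain ⟨l, hperm, hsub⟩ := h
  rw [← (hperm.map f).sum_eq]
  exact (hsub.map f).sum_le_sum (by simpa using h₀)

namespace SimpleGraph.Walk

variable {V : Type*} {G : SimpleGraph V}

theorem exists_shorter_of_not_nodup_darts {s t : V} (p : G.Walk s t) (hp : ¬p.darts.Nodup) :
    ∃ p' : G.Walk s t, p'.length < p.length ∧ p.support ⊆ p'.support ∧
      p'.edges <+~ p.edges := by
  induction p with
  | nil => simp at hp
  | @cons u v t h p₀ ih =>
    rw [darts_cons, List.nodup_cons, not_and_or, not_not] at hp
    rcases hp with hrepeat | hp₀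
    · obtain ⟨c, r, rfl⟩ := (isSubwalk_toWalk_iff_mem_darts p₀ h).mpr hrepeat
      refine ⟨c.reverse.append r, ?_, ?_, ?_⟩
      · simp only [length_append, length_reverse, length_cons]
        omega
      · intro x hx
        simp only [support_cons, support_append, Adj.toWalk, support_nil, List.tail_cons,
          List.mem_cons, List.mem_append, List.not_mem_nil, or_false, support_reverse,
          List.mem_reverse] at hx ⊢
        rcases hx with rfl | (hx | rfl) | hx
        · exact Or.inl c.end_mem_support
        · exact Or.inl hx
        · exact Or.inl c.start_mem_support
        · exact Or.inr hx
      · simp only [edges_cons, edges_append, edges_reverse, Adj.toWalk, edges_nil,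
          List.append_assoc, List.singleton_append]
        exact ((List.reverse_perm _).append_right _).subperm.trans
          ((List.sublist_cons_self _ _).append_left _ |>.cons _).subperm
    · obtain ⟨p', hlen, hsupp, hedges⟩ := ih hp₀
      refine ⟨p'.cons h, by simpa using hlen, ?_, ?_⟩
      · simpa using List.cons_subset_cons u hsupp
      · simpa using (List.subperm_cons _).mpr hedges

theorem exists_darts_nodup_support_subset_edges_subperm {s t : V} (p : G.Walk s t) :
    ∃ q : G.Walk s t, p.support ⊆ q.support ∧ q.darts.Nodup ∧ q.edges <+~ p.edges := by
  by_cases hp : p.darts.Nodup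
  · exact ⟨p, List.Subset.refl _, hp, Subperm.refl _⟩
  obtain ⟨p', hlen, hsupp, hedges⟩ := p.exists_shorter_of_not_nodup_darts hp
  obtain ⟨q, hsupp', hq, hedges'⟩ := p'.exists_darts_nodup_support_subset_edges_subperm
  exact ⟨q, List.Subset.trans hsupp hsupp', hq, hedges'.trans hedges⟩
termination_by p.length

end SimpleGraph.Walk

theorem tree_walk_reduction_general {V : Type}
    (T : SimpleGraph V) (s t : V) (p : T.Walk s t) :
    ∃ q : T.Walk s t,
      (∀ v ∈ p.support, v ∈ q.support) ∧
      q.darts.Nodup ∧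
      ∀ w : Sym2 V → ℝ, (∀ e, 0 ≤ w e) →
        (q.edges.map w).sum ≤ (p.edges.map w).sum := by
  obtain ⟨q, hsupp, hq, hedges⟩ := p.exists_darts_nodup_support_subset_edges_subperm
  exact ⟨q, hsupp, hq, fun w hw ↦ hedges.sum_map_le_sum_map w fun e _ ↦ hw e⟩

/-- In a finite tree `T`, every walk `p` from `s` to `t` can be
replaced by a walk `q` from `s` to `t` that visits every vertex `p` visits, traverses
each edge of `T` at most once in each direction (its list of darts has no
duplicates), and whose total weight, for every nonnegative edge-weight function `w`
(summing `w` over traversals), is at most that of `p`.  In particular an optimal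
embedding of a uniform line on `T` can be chosen to traverse every edge at most once
in each direction. -/
theorem tree_walk_reduction {V : Type} [Fintype V] [DecidableEq V]
    (T : SimpleGraph V) (hT : T.IsTree) (s t : V) (p : T.Walk s t) :
    ∃ q : T.Walk s t,
      (∀ v ∈ p.support, v ∈ q.support) ∧
      q.darts.Nodup ∧
      ∀ w : Sym2 V → ℝ, (∀ e, 0 ≤ w e) →
        (q.edges.map w).sum ≤ (p.edges.map w).sum :=
  tree_walk_reduction_general T s t p
end

section
/- Let T be a finite tree on n vertices and let p be a walk in T from s to t that visits every vertex of T. Then every edge of T is traversed by p, every edge of T not lying on the unique s–t path in T is traversed at least twice by p, and consequently, for every nonnegative edge-weight function w on T, the total w-weight of p (summing w over traversals) is at least 2·∑_{e ∈ E(T)} w(e) − dist_w(s, t), where dist_w denotes the weighted tree distance. -/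
/-!
Every edge `e` of a tree is a bridge, so deleting it leaves two sides, and a walk crosses `e`
an odd number of times exactly when its ends lie on different sides. Hence any two walks with
the same ends cross `e` with the same parity. A walk through both endpoints of `e` crosses it;
if moreover the `s`–`t` path avoids `e`, that number of crossings is even, hence at least two.
So every edge is traversed at least twice by `p` and `pst` together, which is the weight bound.
-/

theorem List.sum_map_eq_sum_count_smul_of_subset {α M : Type*} [DecidableEq α] [AddCommMonoid M]
    (l : List α) (s : Finset α) (hs : l.toFinset ⊆ s) (f : α → M) :
    (l.map f).sum = ∑ a ∈ s, l.count a • f a := by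
  rw [Finset.sum_list_map_count]
  refine Finset.sum_subset hs fun a _ ha => ?_
  rw [List.count_eq_zero_of_not_mem (by simpa using ha), zero_smul]

namespace SimpleGraph

variable {V : Type*} {G : SimpleGraph V} {x y : V}

/-- `hS` says that `e` is the only edge leaving `S`. -/
theorem Walk.even_count_edges_iff_of_boundary_eq [DecidableEq V] {S : Set V} {e : Sym2 V}
    (hS : ∀ ⦃a b⦄, G.Adj a b → ((a ∈ S ↔ b ∈ S) ↔ s(a, b) ≠ e)) :
    ∀ {x y : V} (q : G.Walk x y), Even (q.edges.count e) ↔ (x ∈ S ↔ y ∈ S)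
  | _, _, .nil => by simp
  | a, _, .cons (v := b) h q => by
    have ih := even_count_edges_iff_of_boundary_eq hS q
    rw [edges_cons, List.count_cons]
    by_cases he : s(a, b) = e
    · have := (hS h).not.2 (not_not.2 he)
      simp only [he, beq_self_eq_true, if_true, Nat.even_add_one, ih]
      tauto
    · have := (hS h).2 he
      simp only [beq_false_of_ne he, Bool.false_eq_true, if_false, add_zero, ih]
      tauto

theorem IsBridge.even_count_edges_iff [DecidableEq V] {e : Sym2 V} (hb : G.IsBridge e)
    (p q : G.Walk x y) : Even (p.edges.count e) ↔ Even (q.edges.count e) := by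
  induction e using Sym2.ind with | _ u v =>
  set S : Set V := {z | (G.deleteEdges {s(u, v)}).Reachable v z}
  have hv : v ∈ S := Reachable.refl v
  have hu : u ∉ S := fun h => isBridge_iff.1 hb h.symm
  have hS : ∀ ⦃a b⦄, G.Adj a b → ((a ∈ S ↔ b ∈ S) ↔ s(a, b) ≠ s(u, v)) := by
    intro a b hab
    refine ⟨fun hab' he => ?_, fun he => ?_⟩
    · rcases Sym2.eq_iff.1 he with ⟨rfl, rfl⟩ | ⟨rfl, rfl⟩ <;> tauto
    · have : (G.deleteEdges {s(u, v)}).Adj a b := deleteEdges_adj.2 ⟨hab, by simpa using he⟩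
      exact ⟨fun ha => ha.trans this.reachable, fun hbz => hbz.trans this.symm.reachable⟩
  rw [p.even_count_edges_iff_of_boundary_eq hS, q.even_count_edges_iff_of_boundary_eq hS]

theorem IsBridge.mem_edges_of_mem_support [DecidableEq V] {u v : V} (hb : G.IsBridge s(u, v))
    (p : G.Walk x y) (hu : u ∈ p.support) (hv : v ∈ p.support) : s(u, v) ∈ p.edges := by
  have hsub : ((p.takeUntil u hu).reverse.append (p.takeUntil v hv)).edges ⊆ p.edges := by
    intro e he
    rw [Walk.edges_append, Walk.edges_reverse, List.mem_append, List.mem_reverse] at he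
    exact he.elim (p.edges_takeUntil_subset_edges hu ·) (p.edges_takeUntil_subset_edges hv ·)
  exact hsub (Walk.mem_edges_of_not_reachable_deleteEdges _ (isBridge_iff.1 hb))

theorem IsBridge.two_le_count_edges_add_count [DecidableEq V] {e : Sym2 V} (hb : G.IsBridge e)
    {p : G.Walk x y} (hp : e ∈ p.edges) (q : G.Walk x y) :
    2 ≤ p.edges.count e + q.edges.count e := by
  have hp₁ := List.count_pos_iff.2 hp
  by_cases hq : e ∈ q.edges
  · have := List.count_pos_iff.2 hq
    omega
  · obtain ⟨k, hk⟩ : Even (p.edges.count e) :=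
      (hb.even_count_edges_iff p q).2 (by simp [List.count_eq_zero_of_not_mem hq])
    omega

end SimpleGraph

theorem tree_spanning_walk_lower_bound_general {V : Type} [Fintype V] [DecidableEq V]
    (T : SimpleGraph V) (hT : T.IsTree) [DecidableRel T.Adj]
    (s t : V) (p : T.Walk s t) (hp : ∀ v : V, v ∈ p.support)
    (pst : T.Walk s t) :
    (∀ e ∈ T.edgeSet, e ∈ p.edges) ∧
    (∀ e ∈ T.edgeSet, e ∉ pst.edges → 2 ≤ p.edges.count e) ∧
    (∀ w : Sym2 V → ℝ, (∀ e, 0 ≤ w e) →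
      2 * (∑ e ∈ T.edgeFinset, w e) - (pst.edges.map w).sum ≤
        (p.edges.map w).sum) := by
  have hbridge := SimpleGraph.isAcyclic_iff_forall_isBridge.1 hT.isAcyclic
  have hcover : ∀ e ∈ T.edgeSet, e ∈ p.edges := by
    intro e he
    induction e using Sym2.ind with | _ u v =>
    exact (hbridge he).mem_edges_of_mem_support p (hp u) (hp v)
  have htwo (e) (he : e ∈ T.edgeSet) : 2 ≤ p.edges.count e + pst.edges.count e :=
    (hbridge he).two_le_count_edges_add_count (hcover e he) pst
  refine ⟨hcover, fun e he hst => ?_, fun w hw => ?_⟩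
  · simpa [List.count_eq_zero_of_not_mem hst] using htwo e he
  have hsub (q : T.Walk s t) : q.edges.toFinset ⊆ T.edgeFinset := fun e he => by
    simpa using q.edges_subset_edgeSet (List.mem_toFinset.1 he)
  rw [List.sum_map_eq_sum_count_smul_of_subset _ _ (hsub p),
    List.sum_map_eq_sum_count_smul_of_subset _ _ (hsub pst), sub_le_iff_le_add,
    ← Finset.sum_add_distrib, Finset.mul_sum]
  refine Finset.sum_le_sum fun e he => ?_
  rw [nsmul_eq_mul, nsmul_eq_mul, ← add_mul]
  exact mul_le_mul_of_nonneg_right (mod_cast htwo e (by simpa using he)) (hw e)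

/-- Let `p` be a walk in a finite tree `T` from `s` to `t` visiting
every vertex, and let `pst` be the (unique) simple path from `s` to `t`.  Then every
edge of `T` is traversed by `p`; every edge not on `pst` is traversed at least twice;
and consequently for every nonnegative edge-weight function `w` the total weight of
`p` (summing over traversals) is at least `2·∑_e w e − dist_w(s,t)`, where
`dist_w(s,t)` is the weight of `pst`. -/
theorem tree_spanning_walk_lower_bound {V : Type} [Fintype V] [DecidableEq V]
    (T : SimpleGraph V) (hT : T.IsTree) [DecidableRel T.Adj]
    (s t : V) (p : T.Walk s t) (hp : ∀ v : V, v ∈ p.support)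
    (pst : T.Walk s t) (hpst : pst.IsPath) :
    (∀ e ∈ T.edgeSet, e ∈ p.edges) ∧
    (∀ e ∈ T.edgeSet, e ∉ pst.edges → 2 ≤ p.edges.count e) ∧
    (∀ w : Sym2 V → ℝ, (∀ e, 0 ≤ w e) →
      2 * (∑ e ∈ T.edgeFinset, w e) - (pst.edges.map w).sum ≤
        (p.edges.map w).sum) :=
  tree_spanning_walk_lower_bound_general T hT s t p hp pst
end

section
/- Let T be a finite tree on n vertices with edge capacities c : E(T) → ℕ satisfying c(e) ≥ 1 for every edge e. Then there exists a bijection v : {1,…,n} → V(T) such that every edge e of T lies on at most c(e) of the unique tree paths between v(i) and v(i+1) (over i = 1,…,n−1) if and only if there exist vertices s, t ∈ V(T) such that the unique simple path from s to t in T contains every edge e with c(e) = 1. (This is the characterization underlying the polynomial-time algorithm for cVNE of a uniform linear virtual network on a tree physical network.) -/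
/-!
Deleting an edge `e` of the tree `T` leaves two components, recorded by a Boolean side function
`σ`; the tree path between two vertices uses `e` iff they lie on different sides. So the load of
`e` under an ordering `v` is the number of side changes along the Boolean list `σ ∘ v`. This list
takes both values, so the number is positive, and its parity records whether `v 0` and
`v (n - 1)` lie on different sides. Hence load `1` forces `e` onto the path from `v 0` to
`v (n - 1)`.

Conversely, by induction on the tree, for `s ≠ t` there is an ordering from `s` to `t` along
which every single-edge cut changes side at most twice: order the tree minus a leaf and insert
the leaf next to its neighbour. Along such an ordering an edge of the `s`–`t` path changes side
an odd number of times, hence exactly once.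
-/

namespace List

section NumChanges

variable {α : Type*} [DecidableEq α]

def numChanges : List α → ℕ
  | a :: b :: l => (if a = b then 0 else 1) + numChanges (b :: l)
  | _ => 0

@[simp] lemma numChanges_nil : ([] : List α).numChanges = 0 := rfl

@[simp] lemma numChanges_singleton (a : α) : [a].numChanges = 0 := rfl

@[simp] lemma numChanges_cons_cons (a b : α) (l : List α) :
    (a :: b :: l).numChanges = (if a = b then 0 else 1) + (b :: l).numChanges := rfl

lemma numChanges_cons_le (a : α) (l : List α) : (a :: l).numChanges ≤ l.numChanges + 1 := by
  cases l <;> simp; split <;> omega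

lemma numChanges_eq_zero_iff {l : List α} : l.numChanges = 0 ↔ ∀ a ∈ l, ∀ b ∈ l, a = b := by
  induction l with
  | nil => simp
  | cons x l ih =>
    cases l with
    | nil => simp
    | cons y l =>
      simp only [numChanges_cons_cons, Nat.add_eq_zero_iff, ite_eq_left_iff, one_ne_zero,
        imp_false, not_not, ih]
      constructor
      · rintro ⟨rfl, h⟩ a ha b hb
        exact h a (by simpa using ha) b (by simpa using hb)
      · intro h
        exact ⟨h x (by simp) y (by simp), fun a ha b hb => h a (.tail _ ha) b (.tail _ hb)⟩

lemma numChanges_append_cons_cons_self (A : List α) (a : α) (B : List α) :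
    (A ++ a :: a :: B).numChanges = (A ++ a :: B).numChanges := by
  induction A with
  | nil => simp
  | cons x A ih => cases A <;> simp_all

lemma numChanges_append_le (A B : List α) :
    (A ++ B).numChanges ≤ A.numChanges + B.numChanges + 1 := by
  induction A with
  | nil => simp
  | cons x A ih =>
    cases A with
    | nil => simpa using numChanges_cons_le x B
    | cons y A => simp only [cons_append, numChanges_cons_cons] at ih ⊢; omega

lemma numChanges_append_cons_le_two {X Y : List α} {c : α} (hX : ∀ x ∈ X, x = c)
    (hY : ∀ y ∈ Y, y = c) (a : α) : (X ++ a :: Y).numChanges ≤ 2 := by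
  have hX0 : X.numChanges = 0 :=
    numChanges_eq_zero_iff.2 fun x hx y hy => (hX x hx).trans (hX y hy).symm
  have hY0 : Y.numChanges = 0 :=
    numChanges_eq_zero_iff.2 fun x hx y hy => (hY x hx).trans (hY y hy).symm
  have := numChanges_append_le X (a :: Y)
  have := numChanges_cons_le a Y
  omega

lemma numChanges_ofFn {n : ℕ} (f : Fin n → α) :
    (ofFn f).numChanges =
      ∑ i : Fin (n - 1), if f ⟨i, by omega⟩ = f ⟨i + 1, by omega⟩ then 0 else 1 := by
  induction n with
  | zero => simp
  | succ n ih =>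
    cases n with
    | zero => simp
    | succ n =>
      have htail : (ofFn fun i : Fin (n + 1) => f i.succ) = f 1 :: ofFn fun i => f i.succ.succ :=
        ofFn_succ
      rw [ofFn_succ, htail, numChanges_cons_cons, ← htail, ih]
      show _ = ∑ i : Fin (n + 1), _
      rw [Fin.sum_univ_succ]
      rfl

end NumChanges

lemma even_numChanges_iff (l : List Bool) : Even l.numChanges ↔ l.head? = l.getLast? := by
  induction l with
  | nil => simp
  | cons x l ih =>
    cases l with
    | nil => simp
    | cons y l =>
      obtain ⟨z, hz⟩ : ∃ z, (y :: l).getLast? = some z :=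
        ⟨_, getLast?_eq_some_getLast (by simp)⟩
      rw [numChanges_cons_cons, Nat.even_add, ih, getLast?_cons_cons, hz]
      cases x <;> cases y <;> cases z <;> simp

lemma numChanges_le_one_iff {l : List Bool} (h2 : l.numChanges ≤ 2) (ht : true ∈ l)
    (hf : false ∈ l) : l.numChanges ≤ 1 ↔ l.head? ≠ l.getLast? := by
  have hpos : l.numChanges ≠ 0 := fun h => absurd (numChanges_eq_zero_iff.1 h _ ht _ hf) (by decide)
  rw [Ne, ← even_numChanges_iff]
  constructor
  · rintro h ⟨k, hk⟩
    omega
  · intro h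
    by_contra h'
    exact h ⟨1, by omega⟩

variable {β : Type*}

lemma head?_ofFn {n : ℕ} (f : Fin n → β) (hn : 0 < n) : (ofFn f).head? = some (f ⟨0, hn⟩) := by
  rw [head?_eq_some_head (by simp; omega), head_ofFn]

lemma getLast?_ofFn {n : ℕ} (f : Fin n → β) (hn : 0 < n) :
    (ofFn f).getLast? = some (f ⟨n - 1, by omega⟩) := by
  rw [getLast?_eq_some_getLast (by simp; omega), getLast_ofFn]

lemma Nodup.exists_equiv_ofFn_eq [Fintype β] {L : List β} (hnd : L.Nodup) (hmem : ∀ x, x ∈ L)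
    {n : ℕ} (hn : Fintype.card β = n) : ∃ v : Fin n ≃ β, ofFn v = L := by
  classical
  have hlen : L.length = n := by
    rw [← hn, ← Fintype.card_fin L.length]
    exact Fintype.card_congr (hnd.getEquivOfForallMemList L hmem)
  subst hlen
  exact ⟨hnd.getEquivOfForallMemList L hmem, ofFn_get L⟩

lemma Perm.nodup_and_forall_mem {a : β} {L' : List ({a}ᶜ : Set β)} {N : List β}
    (hN : N.Perm (a :: L'.map Subtype.val)) (hnd : L'.Nodup) (hmem : ∀ x, x ∈ L') :
    N.Nodup ∧ ∀ x, x ∈ N := by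
  refine ⟨hN.nodup_iff.2 (nodup_cons.2 ⟨by simp, hnd.map Subtype.val_injective⟩),
    fun x => hN.mem_iff.2 ?_⟩
  by_cases hx : x = a
  · simp [hx]
  · exact .tail _ (mem_map_of_mem (f := Subtype.val) (hmem ⟨x, hx⟩))

end List

namespace SimpleGraph

variable {V : Type*} {G : SimpleGraph V}

lemma Reachable.eq_of_forall_adj {β : Type*} {f : V → β} (hf : ∀ ⦃x y⦄, G.Adj x y → f x = f y)
    {x y : V} (h : G.Reachable x y) : f x = f y := by
  obtain ⟨p⟩ := h
  induction p with
  | nil => rfl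
  | cons h _ ih => exact (hf h).trans ih

lemma Preconnected.eq_of_forall_not_adj (hG : G.Preconnected) {a : V} (ha : ∀ z, ¬ G.Adj a z)
    (w : V) : w = a := by
  obtain ⟨p⟩ := hG a w
  cases p with
  | nil => rfl
  | cons h _ => exact absurd h (ha _)

lemma IsTree.induce_compl_singleton_of_degree_eq_one (hG : G.IsTree) {v : V}
    [Fintype (G.neighborSet v)] (h : G.degree v = 1) : (G.induce {v}ᶜ).IsTree :=
  ⟨hG.connected.induce_compl_singleton_of_degree_eq_one h, hG.isAcyclic.induce _⟩

lemma subsingleton_compl_singleton_of_adj_of_degree_eq_one {s t : V}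
    (hconn : (G.induce {s}ᶜ).Connected) (hst : G.Adj s t) [Fintype (G.neighborSet t)]
    (ht : G.degree t = 1) : Subsingleton ({s}ᶜ : Set V) := by
  obtain ⟨w, -, hw⟩ := degree_eq_one_iff_existsUnique_adj.1 ht
  have h := hconn.preconnected.eq_of_forall_not_adj (a := ⟨t, hst.ne.symm⟩)
    fun z hz => z.2 ((hw _ hz).trans (hw _ hst.symm).symm)
  exact ⟨fun x y => (h x).trans (h y).symm⟩

lemma IsTree.degree_eq_one_of_leaves_subset_pair [Fintype V] [DecidableRel G.Adj] [Nontrivial V]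
    (hG : G.IsTree) {s t : V} (h : ∀ ℓ, G.degree ℓ = 1 → s ≠ ℓ → t = ℓ) :
    G.degree s = 1 ∧ G.degree t = 1 := by
  obtain ⟨ℓ₁, ℓ₂, hne, h₁, h₂⟩ := hG.exists_ne_and_degree_eq_one
  refine ⟨by_contra fun hs => hne ?_, ?_⟩
  · exact (h ℓ₁ h₁ (by rintro rfl; exact hs h₁)).symm.trans (h ℓ₂ h₂ (by rintro rfl; exact hs h₂))
  · rcases eq_or_ne s ℓ₁ with rfl | hs
    · rwa [h ℓ₂ h₂ hne]
    · rwa [h ℓ₁ h₁ hs]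

def IsEdgeCut (G : SimpleGraph V) (e : Sym2 V) (σ : V → Bool) : Prop :=
  ∀ ⦃x y⦄, G.Adj x y → (σ x ≠ σ y ↔ s(x, y) = e)

lemma IsAcyclic.exists_isEdgeCut (hG : G.IsAcyclic) {e : Sym2 V} (he : e ∈ G.edgeSet) :
    ∃ σ, G.IsEdgeCut e σ := by
  classical
  induction e using Sym2.ind with | _ a b =>
  set H := G.deleteEdges {s(a, b)}
  have hbridge : ¬ H.Reachable a b := isBridge_iff.1 (isAcyclic_iff_forall_adj_isBridge.1 hG he)
  refine ⟨fun z => decide (H.Reachable a z), fun x y hxy => ?_⟩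
  by_cases hxy' : s(x, y) = s(a, b)
  · rcases Sym2.eq_iff.1 hxy' with ⟨rfl, rfl⟩ | ⟨rfl, rfl⟩ <;> simp [hxy', hbridge]
  · have hH : H.Reachable x y := (deleteEdges_adj.2 ⟨hxy, by simpa using hxy'⟩).reachable
    simp only [hxy', iff_false, ne_eq, not_not, decide_eq_decide]
    exact ⟨fun h => h.trans hH, fun h => h.trans hH.symm⟩

section IsEdgeCut

variable {e : Sym2 V} {σ : V → Bool}

lemma IsEdgeCut.surjective (hσ : G.IsEdgeCut e σ) (he : e ∈ G.edgeSet) : Function.Surjective σ := by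
  induction e using Sym2.ind with | _ a b =>
  have hab : σ a ≠ σ b := (hσ he).2 rfl
  intro c
  by_cases hc : σ a = c
  · exact ⟨a, hc⟩
  · exact ⟨b, by revert hab hc; cases σ a <;> cases σ b <;> cases c <;> simp⟩

lemma IsEdgeCut.ne_iff_odd_count [DecidableEq V] (hσ : G.IsEdgeCut e σ) {x y : V}
    (p : G.Walk x y) : σ x ≠ σ y ↔ Odd (p.edges.count e) := by
  induction p with
  | nil => simp
  | @cons x v y h p ih =>
    have hxor : ∀ a b c : Bool, a ≠ c ↔ (a ≠ b ↔ ¬ b ≠ c) := by decide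
    rw [hxor _ (σ v), hσ h, ih, Walk.edges_cons, List.count_cons]
    by_cases hxv : s(x, v) = e <;> simp [hxv, Nat.odd_add_one]

lemma IsEdgeCut.mem_edges_iff [DecidableEq V] (hσ : G.IsEdgeCut e σ) {x y : V} {p : G.Walk x y}
    (hp : p.IsPath) : e ∈ p.edges ↔ σ x ≠ σ y := by
  rw [hσ.ne_iff_odd_count p, ← List.count_pos_iff, Nat.odd_iff]
  have := List.nodup_iff_count_le_one.1 hp.isTrail.edges_nodup e
  omega

lemma IsEdgeCut.sum_ite_mem_edges_eq [DecidableEq V] (hσ : G.IsEdgeCut e σ)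
    {P : (x y : V) → G.Walk x y} (hP : ∀ x y, (P x y).IsPath) {n : ℕ} (v : Fin n → V) :
    (∑ i : Fin (n - 1), if e ∈ (P (v ⟨i, by omega⟩) (v ⟨i + 1, by omega⟩)).edges then 1 else 0) =
      ((List.ofFn v).map σ).numChanges := by
  rw [List.map_ofFn, List.numChanges_ofFn]
  refine Finset.sum_congr rfl fun i _ => ?_
  simp only [hσ.mem_edges_iff (hP _ _), ne_eq, ite_not, Function.comp_apply]

lemma IsEdgeCut.numChanges_map_le_one_iff [DecidableEq V] (hσ : G.IsEdgeCut e σ)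
    (he : e ∈ G.edgeSet) {x y : V} {p : G.Walk x y} (hp : p.IsPath) {L : List V}
    (hL : ∀ z, z ∈ L) (hx : L.head? = some x) (hy : L.getLast? = some y)
    (h2 : (L.map σ).numChanges ≤ 2) : (L.map σ).numChanges ≤ 1 ↔ e ∈ p.edges := by
  have hmem (c : Bool) : c ∈ L.map σ := by
    obtain ⟨z, rfl⟩ := hσ.surjective he c
    exact List.mem_map_of_mem (hL z)
  rw [List.numChanges_le_one_iff h2 (hmem _) (hmem _), hσ.mem_edges_iff hp, List.head?_map,
    List.getLast?_map, hx, hy]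
  simp

end IsEdgeCut

def CutsAtMostOneEdge (G : SimpleGraph V) (σ : V → Bool) : Prop :=
  ∀ ⦃x y x' y'⦄, G.Adj x y → G.Adj x' y' → σ x ≠ σ y → σ x' ≠ σ y' → s(x, y) = s(x', y')

lemma IsEdgeCut.cutsAtMostOneEdge {e : Sym2 V} {σ : V → Bool} (hσ : G.IsEdgeCut e σ) :
    G.CutsAtMostOneEdge σ := fun _ _ _ _ h h' hd hd' => ((hσ h).1 hd).trans ((hσ h').1 hd').symm

section CutsAtMostOneEdge

variable {σ : V → Bool}

lemma CutsAtMostOneEdge.induce (hσ : G.CutsAtMostOneEdge σ) (s : Set V) :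
    (G.induce s).CutsAtMostOneEdge (σ ∘ Subtype.val) := fun _ _ _ _ h h' hd hd' =>
  Sym2.map.injective Subtype.val_injective (by simpa using hσ h h' hd hd')

lemma CutsAtMostOneEdge.apply_eq_of_apply_ne (hσ : G.CutsAtMostOneEdge σ) {ℓ u : V}
    (hconn : (G.induce {ℓ}ᶜ).Connected) (hℓu : G.Adj ℓ u) (hℓ : σ ℓ ≠ σ u) {z : V} (hz : z ≠ ℓ) :
    σ z = σ u := by
  have hloc : ∀ ⦃x y : ({ℓ}ᶜ : Set V)⦄, (G.induce {ℓ}ᶜ).Adj x y → σ x = σ y := by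
    intro x y hxy
    by_contra hd
    rcases Sym2.eq_iff.1 (hσ hxy hℓu hd hℓ) with ⟨h, -⟩ | ⟨-, h⟩
    exacts [x.2 h, y.2 h]
  exact (hconn.preconnected ⟨z, hz⟩ ⟨u, hℓu.ne.symm⟩).eq_of_forall_adj
    (f := fun x : ({ℓ}ᶜ : Set V) => σ x) hloc

end CutsAtMostOneEdge

def CrossesCutsAtMostTwice (G : SimpleGraph V) (L : List V) : Prop :=
  ∀ σ, G.CutsAtMostOneEdge σ → (L.map σ).numChanges ≤ 2

lemma CrossesCutsAtMostTwice.insert {ℓ u : V} {L' : List ({ℓ}ᶜ : Set V)}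
    (hL' : (G.induce {ℓ}ᶜ).CrossesCutsAtMostTwice L') (hconn : (G.induce {ℓ}ᶜ).Connected)
    (hℓu : G.Adj ℓ u) {A B : List V} (hAB : L'.map Subtype.val = A ++ u :: B) :
    G.CrossesCutsAtMostTwice (A ++ ℓ :: u :: B) ∧ G.CrossesCutsAtMostTwice (A ++ u :: ℓ :: B) := by
  have hne : ∀ z ∈ A ++ u :: B, z ≠ ℓ := by
    intro z hz
    obtain ⟨w, -, rfl⟩ := List.mem_map.1 (hAB ▸ hz)
    exact w.2
  have hsame : ∀ σ, G.CutsAtMostOneEdge σ → ((A ++ u :: B).map σ).numChanges ≤ 2 := by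
    intro σ hσ
    rw [← hAB, List.map_map]
    exact hL' _ (hσ.induce _)
  have hconst : ∀ σ, G.CutsAtMostOneEdge σ → σ ℓ ≠ σ u → ∀ z ∈ A ++ u :: B, σ z = σ u :=
    fun σ hσ hℓ z hz => hσ.apply_eq_of_apply_ne hconn hℓu hℓ (hne z hz)
  refine ⟨fun σ hσ => ?_, fun σ hσ => ?_⟩ <;> by_cases hℓ : σ ℓ = σ u
  · simpa [hℓ, List.numChanges_append_cons_cons_self] using hsame σ hσ
  · rw [List.map_append, List.map_cons]
    refine List.numChanges_append_cons_le_two (c := σ u) ?_ ?_ _ <;>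
      rintro _ hx <;> obtain ⟨z, hz, rfl⟩ := List.mem_map.1 hx <;>
      exact hconst σ hσ hℓ z (by simp_all)
  · simpa [hℓ, List.numChanges_append_cons_cons_self] using hsame σ hσ
  · rw [List.append_cons A u, List.map_append, List.map_cons]
    refine List.numChanges_append_cons_le_two (c := σ u) ?_ ?_ _ <;>
      rintro _ hx <;> obtain ⟨z, hz, rfl⟩ := List.mem_map.1 hx <;>
      exact hconst σ hσ hℓ z (by simp at hz ⊢; tauto)

structure IsLowCongestionOrder (G : SimpleGraph V) (s t : V) (L : List V) : Prop where
  nodup : L.Nodup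
  mem : ∀ x, x ∈ L
  head?_eq : L.head? = some s
  getLast?_eq : L.getLast? = some t
  crosses : G.CrossesCutsAtMostTwice L

lemma IsLowCongestionOrder.cons {s u t : V} {hu : u ∈ ({s}ᶜ : Set V)} {ht : t ∈ ({s}ᶜ : Set V)}
    {L' : List ({s}ᶜ : Set V)} (hL' : (G.induce {s}ᶜ).IsLowCongestionOrder ⟨u, hu⟩ ⟨t, ht⟩ L')
    (hconn : (G.induce {s}ᶜ).Connected) (hsu : G.Adj s u) :
    G.IsLowCongestionOrder s t (s :: L'.map Subtype.val) := by
  obtain ⟨B, rfl⟩ := List.head?_eq_some_iff.1 hL'.head?_eq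
  obtain ⟨hnd, hmem⟩ := (List.Perm.refl _).nodup_and_forall_mem hL'.nodup hL'.mem
  refine ⟨hnd, hmem, rfl, ?_, (hL'.crosses.insert hconn hsu (A := []) rfl).1⟩
  rw [List.map_cons, List.getLast?_cons_cons, ← List.map_cons, List.getLast?_map, hL'.getLast?_eq]
  rfl

lemma IsLowCongestionOrder.exists_insert {ℓ u s t : V} {hs : s ∈ ({ℓ}ᶜ : Set V)}
    {ht : t ∈ ({ℓ}ᶜ : Set V)} {L' : List ({ℓ}ᶜ : Set V)}
    (hL' : (G.induce {ℓ}ᶜ).IsLowCongestionOrder ⟨s, hs⟩ ⟨t, ht⟩ L')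
    (hconn : (G.induce {ℓ}ᶜ).Connected) (hℓu : G.Adj ℓ u) (hst : s ≠ t) :
    ∃ L, G.IsLowCongestionOrder s t L := by
  have hhead : (L'.map Subtype.val).head? = some s := by rw [List.head?_map, hL'.head?_eq]; rfl
  have hlast : (L'.map Subtype.val).getLast? = some t := by
    rw [List.getLast?_map, hL'.getLast?_eq]; rfl
  obtain ⟨A, B, hAB⟩ :=
    List.append_of_mem (List.mem_map_of_mem (f := Subtype.val) (hL'.mem ⟨u, hℓu.ne.symm⟩))
  obtain ⟨hbefore, hafter⟩ := hL'.crosses.insert hconn hℓu hAB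
  rw [hAB] at hhead hlast
  -- insert `ℓ` after `u`, unless `u = t` is the last vertex
  rcases B with _ | ⟨b, B⟩
  · have hut : u = t := by simpa using hlast
    have hperm : (A ++ [ℓ, u]).Perm (ℓ :: L'.map Subtype.val) := by
      rw [hAB]
      exact List.perm_middle
    obtain ⟨hnd, hmem⟩ := hperm.nodup_and_forall_mem hL'.nodup hL'.mem
    refine ⟨A ++ [ℓ, u], hnd, hmem, ?_, by simp [hut], hbefore⟩
    rcases A with _ | ⟨a, A⟩
    · exact absurd ((Option.some_injective _ hhead).symm.trans hut) hst
    · simpa using hhead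
  · have hperm : (A ++ u :: ℓ :: b :: B).Perm (ℓ :: L'.map Subtype.val) := by
      rw [hAB]
      simpa using List.perm_middle (l₁ := A ++ [u]) (a := ℓ) (l₂ := b :: B)
    obtain ⟨hnd, hmem⟩ := hperm.nodup_and_forall_mem hL'.nodup hL'.mem
    refine ⟨A ++ u :: ℓ :: b :: B, hnd, hmem, ?_, by simpa using hlast, hafter⟩
    rcases A with _ | ⟨a, A⟩ <;> simpa using hhead

theorem IsTree.exists_isLowCongestionOrder [Fintype V] (hG : G.IsTree) {s t : V}
    (hst : s ≠ t ∨ Subsingleton V) : ∃ L, G.IsLowCongestionOrder s t L := by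
  obtain ⟨n, hn⟩ : ∃ n, Fintype.card V = n := ⟨_, rfl⟩
  induction n generalizing V with
  | zero => exact absurd hn (Fintype.card_pos_iff.2 ⟨s⟩).ne'
  | succ m ih =>
    rcases m.eq_zero_or_pos with rfl | hm
    · have : Subsingleton V := Fintype.card_le_one_iff_subsingleton.1 hn.le
      obtain rfl := Subsingleton.elim s t
      exact ⟨[s], by simp, fun x => by simp [Subsingleton.elim x s], rfl, rfl, fun σ _ => by simp⟩
    classical
    have hst : s ≠ t := hst.resolve_right fun h => by
      have := Fintype.card_le_one_iff_subsingleton.2 h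
      omega
    have : Nontrivial V := ⟨s, t, hst⟩
    have hcard (ℓ : V) : Fintype.card ({ℓ}ᶜ : Set V) = m := by
      rw [Fintype.card_compl_set, hn]
      simp
    by_cases hinner : ∃ ℓ, G.degree ℓ = 1 ∧ s ≠ ℓ ∧ t ≠ ℓ
    · obtain ⟨ℓ, hℓ, hs, ht⟩ := hinner
      obtain ⟨u, hℓu, -⟩ := degree_eq_one_iff_existsUnique_adj.1 hℓ
      have htree := hG.induce_compl_singleton_of_degree_eq_one hℓ
      obtain ⟨L', hL'⟩ := ih htree (s := ⟨s, hs⟩) (t := ⟨t, ht⟩)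
        (.inl fun h => hst (congrArg Subtype.val h)) (hcard ℓ)
      exact hL'.exists_insert htree.connected hℓu hst
    push Not at hinner
    obtain ⟨hs, ht⟩ := hG.degree_eq_one_of_leaves_subset_pair hinner
    obtain ⟨u, hsu, -⟩ := degree_eq_one_iff_existsUnique_adj.1 hs
    have htree := hG.induce_compl_singleton_of_degree_eq_one hs
    have hut : u ≠ t ∨ Subsingleton ({s}ᶜ : Set V) := by
      refine or_iff_not_imp_left.2 fun hut => ?_
      rw [not_not] at hut
      subst hut
      exact subsingleton_compl_singleton_of_adj_of_degree_eq_one htree.connected hsu ht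
    obtain ⟨L', hL'⟩ := ih htree (s := ⟨u, hsu.ne.symm⟩) (t := ⟨t, hst.symm⟩)
      (hut.imp_left fun h e => h (congrArg Subtype.val e)) (hcard s)
    exact ⟨_, hL'.cons htree.connected hsu⟩

lemma exists_ne_or_subsingleton_edges_subset {P : (x y : V) → G.Walk x y}
    (hP : ∀ x y, (P x y).IsPath) (s t : V) :
    ∃ s' t', (s' ≠ t' ∨ Subsingleton V) ∧ (P s t).edges ⊆ (P s' t').edges := by
  rcases ne_or_eq s t with h | rfl
  · exact ⟨s, t, .inl h, List.Subset.refl _⟩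
  have hnil : (P s s).edges = [] := Walk.edges_eq_nil.2 (Walk.isPath_iff_nil.1 (hP s s))
  rcases subsingleton_or_nontrivial V with hV | hV
  · exact ⟨s, s, .inr hV, List.Subset.refl _⟩
  · obtain ⟨x, y, hxy⟩ := exists_pair_ne V
    exact ⟨x, y, .inl hxy, by simp [hnil]⟩

end SimpleGraph

open SimpleGraph

/-- Characterization underlying the polynomial-time algorithm for
cVNE of a uniform linear virtual network on a tree physical network.  Let `T` be a
finite tree on `n` vertices with edge capacities `c ≥ 1`, and let `P x y` denote the
(unique) simple path of `T` from `x` to `y`.  There is a bijection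
`v : {1,…,n} → V(T)` such that every edge `e` lies on at most `c e` of the paths
`P (v i) (v (i+1))` iff there are vertices `s, t` such that the path from `s` to `t`
contains every edge of capacity `1`. -/
theorem uniform_line_on_tree_cVNE_characterization {V : Type} [Fintype V]
    [DecidableEq V] (T : SimpleGraph V) (hT : T.IsTree)
    (n : ℕ) (hn : 1 ≤ n) (hcard : Fintype.card V = n)
    (c : Sym2 V → ℕ) (hc : ∀ e ∈ T.edgeSet, 1 ≤ c e)
    (P : (x y : V) → T.Walk x y) (hP : ∀ x y, (P x y).IsPath) :
    (∃ v : Fin n ≃ V, ∀ e ∈ T.edgeSet,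
        (∑ i : Fin (n - 1),
          if e ∈ (P (v ⟨i.val, by have := i.isLt; omega⟩)
              (v ⟨i.val + 1, by have := i.isLt; omega⟩)).edges then 1 else 0) ≤ c e) ↔
    (∃ s t : V, ∀ e ∈ T.edgeSet, c e = 1 → e ∈ (P s t).edges) := by
  constructor
  · rintro ⟨v, hv⟩
    refine ⟨v ⟨0, by omega⟩, v ⟨n - 1, by omega⟩, fun e he hce => ?_⟩
    obtain ⟨σ, hσ⟩ := hT.isAcyclic.exists_isEdgeCut he
    have hload := hv e he
    rw [hσ.sum_ite_mem_edges_eq hP, hce] at hload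
    exact (hσ.numChanges_map_le_one_iff he (hP _ _) (fun x => List.mem_ofFn.2 (v.surjective x))
      (List.head?_ofFn _ (by omega)) (List.getLast?_ofFn _ (by omega)) (by omega)).1 hload
  · rintro ⟨s, t, hst⟩
    obtain ⟨s', t', hne', hsub⟩ := exists_ne_or_subsingleton_edges_subset hP s t
    obtain ⟨L, hL⟩ := hT.exists_isLowCongestionOrder hne'
    obtain ⟨v, rfl⟩ := hL.nodup.exists_equiv_ofFn_eq hL.mem hcard
    refine ⟨v, fun e he => ?_⟩
    obtain ⟨σ, hσ⟩ := hT.isAcyclic.exists_isEdgeCut he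
    rw [hσ.sum_ite_mem_edges_eq hP]
    have hle := hL.crosses σ hσ.cutsAtMostOneEdge
    rcases (hc e he).eq_or_lt with hce | hce
    · rw [← hce]
      exact (hσ.numChanges_map_le_one_iff he (hP _ _) hL.mem hL.head?_eq hL.getLast?_eq hle).2
        (hsub (hst e he hce.symm))
    · omega
end
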